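/- arXiv:2109.09200 — 6 statements merged into one kernel-verified Lean document; each statement's English description precedes it below -/
import Mathlib

section
/- Let B be a building set on a finite ground set V, and let M, N be two disjoint maximal blocks of B strictly contained in a block P ∈ B. Then P is elementary, i.e., for all B', B'' ∈ B \ {P} with P = B' ∪ B'', one has B' ∩ B'' = ∅. -/
open scoped Classical

variable {V : Type*} [Fintype V] [DecidableEq V]

/-- A building set on the finite ground set `V`. -/
def IsBuildingSet (B : Finset (Finset V)) : Prop :=
  (∀ b ∈ B, b.Nonempty) ∧
  (∀ b₁ ∈ B, ∀ b₂ ∈ B, (b₁ ∩ b₂).Nonempty → b₁ ∪ b₂ ∈ B) ∧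
  (∀ v : V, {v} ∈ B)

/-- `M` is an inclusion-maximal block of `B` strictly contained in `P`. -/
def MaxIn (B : Finset (Finset V)) (P M : Finset V) : Prop :=
  M ∈ B ∧ M ⊂ P ∧ ∀ C ∈ B, M ⊂ C → ¬ C ⊂ P

/-- The block `P` is elementary. -/
def Elementary (B : Finset (Finset V)) (P : Finset V) : Prop :=
  ∀ B' ∈ B, ∀ B'' ∈ B, B' ≠ P → B'' ≠ P → P = B' ∪ B'' → B' ∩ B'' = ∅

/-- The connected components of `U`: inclusion-maximal blocks of `B` contained in `U`. -/
noncomputable def ccSet (B : Finset (Finset V)) (U : Finset V) : Finset (Finset V) :=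
  B.filter (fun K => K ⊆ U ∧ ∀ C ∈ B, C ⊆ U → K ⊆ C → K = C)

/-- A `B`-nested set: contained in `B`, containing all maximal elements of `B`,
and such that for every subset `X` whose union lies in `B`, the union lies in `X`. -/
def IsNested (B N : Finset (Finset V)) : Prop :=
  N ⊆ B ∧
  (∀ K ∈ B, (∀ C ∈ B, K ⊆ C → K = C) → K ∈ N) ∧
  (∀ X ⊆ N, X.sup id ∈ B → X.sup id ∈ X)

/-- A maximal `B`-nested set (inclusion-maximal among `B`-nested sets). -/
def IsMaxNested (B N : Finset (Finset V)) : Prop :=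
  IsNested B N ∧ ∀ N', IsNested B N' → N ⊆ N' → N = N'

/-- Two blocks are exchangeable if two maximal nested sets differ exactly by them. -/
def ExchangeableB (B : Finset (Finset V)) (b b' : Finset V) : Prop :=
  b ≠ b' ∧ ∃ N N', IsMaxNested B N ∧ IsMaxNested B N' ∧ b ∈ N ∧ b' ∈ N' ∧
    N.erase b = N'.erase b'

/-- `P` is the parent of `b` in `N`: the unique minimal element of `{C ∈ N | b ⊊ C}`. -/
def IsParent (N : Finset (Finset V)) (b P : Finset V) : Prop :=
  P ∈ N ∧ b ⊂ P ∧ ∀ C ∈ N, b ⊂ C → P ⊆ C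

/-- `(b, b', P)` is an exchange frame. -/
def IsExchangeFrame (B : Finset (Finset V)) (b b' P : Finset V) : Prop :=
  ∃ N N', IsMaxNested B N ∧ IsMaxNested B N' ∧ b ∈ N ∧ b' ∈ N' ∧ b ≠ b' ∧
    N.erase b = N'.erase b' ∧ IsParent N b P

/-- Characteristic vector of a subset of `V` in `ℝ^V`. -/
def chi (S : Finset V) : V → ℝ := fun v => if v ∈ S then 1 else 0

/-- The root of `C` in the nested set `N`. -/
noncomputable def root (N : Finset (Finset V)) (C : Finset V) : Finset V :=
  C \ (N.filter (fun D => D ⊂ C)).sup id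


lemma key_step {V : Type*} [Fintype V] [DecidableEq V] {B : Finset (Finset V)}
    (hB : IsBuildingSet B) {P M X : Finset V}
    (hM : MaxIn B P M) (hX : X ∈ B) (hXP : X ⊆ P)
    (hint : (M ∩ X).Nonempty) : X ⊆ M ∨ M ∪ X = P := by
  have hU : M ∪ X ∈ B := hB.2.1 M hM.1 X hX hint
  by_cases h : M ∪ X = P
  · exact Or.inr h
  · left
    have hsub : M ∪ X ⊆ P := Finset.union_subset hM.2.1.subset hXP
    have hnss : ¬ M ⊂ M ∪ X := fun hss => hM.2.2 _ hU hss (lt_of_le_of_ne hsub h)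
    have heq : M ∪ X = M := by
      by_contra hne
      exact hnss (lt_of_le_of_ne Finset.subset_union_left (fun e => hne e.symm))
    exact heq ▸ Finset.subset_union_right

lemma aux_step {V : Type*} [Fintype V] [DecidableEq V] {B : Finset (Finset V)}
    (hB : IsBuildingSet B) {P M N B' B'' : Finset V} (hP : P ∈ B)
    (hM : MaxIn B P M) (hN : MaxIn B P N) (hMN : M ∩ N = ∅)
    (hB' : B' ∈ B) (hB'' : B'' ∈ B) (hne' : B' ≠ P) (hne'' : B'' ≠ P)
    (hunion : P = B' ∪ B'') (hint : (B' ∩ B'').Nonempty)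
    (hMB' : (M ∩ B').Nonempty) : False := by
  have hdisj : ∀ x, x ∈ M → x ∈ N → False := by
    intro x hx hy
    have : x ∈ M ∩ N := Finset.mem_inter.mpr ⟨hx, hy⟩
    rw [hMN] at this; exact absurd this (Finset.notMem_empty x)
  have hB'P : B' ⊆ P := hunion ▸ Finset.subset_union_left
  have hB''P : B'' ⊆ P := hunion ▸ Finset.subset_union_right
  have hB'ssP : B' ⊂ P := lt_of_le_of_ne hB'P hne'
  have hB''ssP : B'' ⊂ P := lt_of_le_of_ne hB''P hne''
  -- maximality closure: any block between N (resp M) and P equals it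
  have maxeq : ∀ {K C : Finset V}, MaxIn B P K → C ∈ B → K ⊆ C → C ⊂ P → K = C := by
    intro K C hK hC hKC hCP
    by_contra hne
    exact hK.2.2 C hC (lt_of_le_of_ne hKC hne) hCP
  rcases key_step hB hM hB' hB'P hMB' with hsub | hcov
  · -- B' ⊆ M
    have hMB'' : (M ∩ B'').Nonempty := by
      obtain ⟨v, hv⟩ := hint
      exact ⟨v, Finset.mem_inter.mpr ⟨hsub (Finset.mem_inter.mp hv).1,
        (Finset.mem_inter.mp hv).2⟩⟩
    rcases key_step hB hM hB'' hB''P hMB'' with hsub2 | hcov2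
    · exact absurd (le_antisymm hM.2.1.subset
        (hunion ▸ Finset.union_subset hsub hsub2)) hM.2.1.ne
    · -- M ∪ B'' = P, N ⊆ B'', N = B''
      have hNB'' : N ⊆ B'' := by
        intro x hx
        have hxP : x ∈ M ∪ B'' := hcov2 ▸ hN.2.1.subset hx
        rcases Finset.mem_union.mp hxP with h | h
        · exact absurd hx (fun hx' => hdisj x h hx')
        · exact h
      have hNeq : N = B'' := maxeq hN hB'' hNB'' hB''ssP
      obtain ⟨v, hv⟩ := hint
      obtain ⟨hv1, hv2⟩ := Finset.mem_inter.mp hv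
      exact hdisj v (hsub hv1) (hNeq ▸ hv2)
  · -- M ∪ B' = P, so N ⊆ B', N = B'
    have hNB' : N ⊆ B' := by
      intro x hx
      have hxP : x ∈ M ∪ B' := hcov ▸ hN.2.1.subset hx
      rcases Finset.mem_union.mp hxP with h | h
      · exact absurd hx (fun hx' => hdisj x h hx')
      · exact h
    have hNeq : N = B' := maxeq hN hB' hNB' hB'ssP
    have hNB''int : (N ∩ B'').Nonempty := by
      obtain ⟨v, hv⟩ := hint
      obtain ⟨hv1, hv2⟩ := Finset.mem_inter.mp hv
      exact ⟨v, Finset.mem_inter.mpr ⟨hNeq ▸ hv1, hv2⟩⟩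
    rcases key_step hB hN hB'' hB''P hNB''int with hsub2 | hcov2
    · -- B'' ⊆ N = B', so P = B'
      apply hne'
      apply le_antisymm hB'P
      rw [hunion]
      exact Finset.union_subset (le_refl B') (hNeq ▸ hsub2)
    · -- N ∪ B'' = P, M ⊆ B''
      have hMB''sub : M ⊆ B'' := by
        intro x hx
        have hxP : x ∈ N ∪ B'' := hcov2 ▸ hM.2.1.subset hx
        rcases Finset.mem_union.mp hxP with h | h
        · exact absurd h (fun hx' => hdisj x hx hx')
        · exact h
      have hMeq : M = B'' := maxeq hM hB'' hMB''sub hB''ssP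
      obtain ⟨v, hv⟩ := hint
      obtain ⟨hv1, hv2⟩ := Finset.mem_inter.mp hv
      exact hdisj v (hMeq ▸ hv2) (hNeq ▸ hv1)

theorem stmt0 (B : Finset (Finset V)) (hB : IsBuildingSet B)
    (P M N : Finset V) (hP : P ∈ B)
    (hM : MaxIn B P M) (hN : MaxIn B P N) (hMN : M ∩ N = ∅) :
    Elementary B P := by
  intro B' hB' B'' hB'' hne' hne'' hunion
  by_contra hne
  have hint : (B' ∩ B'').Nonempty := Finset.nonempty_iff_ne_empty.mpr hne
  obtain ⟨v, hv⟩ := hB.1 M hM.1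
  have hvP : v ∈ B' ∪ B'' := hunion ▸ hM.2.1.subset hv
  rcases Finset.mem_union.mp hvP with h | h
  · exact aux_step hB hP hM hN hMN hB' hB'' hne' hne'' hunion hint
      ⟨v, Finset.mem_inter.mpr ⟨hv, h⟩⟩
  · exact aux_step hB hP hM hN hMN hB'' hB' hne'' hne'
      (by rw [hunion, Finset.union_comm]) (by rwa [Finset.inter_comm])
      ⟨v, Finset.mem_inter.mpr ⟨hv, h⟩⟩
end

section
/- Let B be a building set on a finite ground set V, let N be a B-nested set, and let B₀ ∈ B be a block that is not a maximal element of B. Then the set {C ∈ N : B₀ ⊊ C} is nonempty and totally ordered by inclusion; in particular it has a unique inclusion-minimal element. -/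
open scoped Classical

variable {V : Type*} [Fintype V] [DecidableEq V]

/-! Two members of `N` strictly containing `b` meet in `b`, so their union is a block, and
nestedness forces that union to be one of the two: they are comparable. A maximal block
above `b` lies in `N`, and it is strictly larger than `b` because `b` is not maximal. A finite
nonempty chain has a least element. -/

theorem Finset.exists_isLeast_of_isChain {α : Type*} [PartialOrder α] {s : Finset α}
    (hs : s.Nonempty) (hc : IsChain (· ≤ ·) (s : Set α)) : ∃ m, IsLeast (s : Set α) m := by
  obtain ⟨m, hm⟩ := s.exists_minimal hs
  refine ⟨m, hm.1, fun x hx => ?_⟩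
  rcases hc.total hm.1 hx with h | h
  · exact h
  · exact hm.2 hx h

namespace IsNested

variable {α : Type*} [DecidableEq α] {B N : Finset (Finset α)}

theorem subset_or_subset_of_union_mem (hN : IsNested B N) {C C' : Finset α} (hC : C ∈ N)
    (hC' : C' ∈ N) (hu : C ∪ C' ∈ B) : C ⊆ C' ∨ C' ⊆ C := by
  have hsup : ({C, C'} : Finset (Finset α)).sup id = C ∪ C' := by simp
  have hpair : ({C, C'} : Finset (Finset α)) ⊆ N := by simp [Finset.insert_subset_iff, hC, hC']
  have hmem := hN.2.2 _ hpair (hsup ▸ hu)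
  rw [hsup, Finset.mem_insert, Finset.mem_singleton] at hmem
  rcases hmem with h | h
  · exact Or.inr (Finset.union_eq_left.1 h)
  · exact Or.inl (Finset.union_eq_right.1 h)

theorem subset_or_subset (hB : IsBuildingSet B) (hN : IsNested B N) {C C' : Finset α}
    (hC : C ∈ N) (hC' : C' ∈ N) (hCC' : (C ∩ C').Nonempty) : C ⊆ C' ∨ C' ⊆ C :=
  hN.subset_or_subset_of_union_mem hC hC' (hB.2.1 _ (hN.1 hC) _ (hN.1 hC') hCC')

theorem isChain_ssupersets (hB : IsBuildingSet B) (hN : IsNested B N) {b : Finset α}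
    (hb : b.Nonempty) : IsChain (· ≤ ·) (N.filter (b ⊂ ·) : Set (Finset α)) := by
  intro C hC C' hC' _
  rw [Finset.coe_filter] at hC hC'
  obtain ⟨v, hv⟩ := hb
  exact hN.subset_or_subset hB hC.1 hC'.1 ⟨v, Finset.mem_inter.2 ⟨hC.2.1 hv, hC'.2.1 hv⟩⟩

theorem exists_mem_ssuperset (hN : IsNested B N) {b : Finset α} (hb : b ∈ B)
    (hnotmax : ∃ C ∈ B, b ⊂ C) : ∃ C ∈ N, b ⊂ C := by
  obtain ⟨M, hbM, hM⟩ := B.exists_le_maximal hb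
  refine ⟨M, hN.2.1 M hM.1 fun C hC hMC => le_antisymm hMC (hM.2 hC hMC), lt_of_le_of_ne hbM ?_⟩
  rintro rfl
  obtain ⟨C, hC, hbC⟩ := hnotmax
  exact hbC.not_ge (hM.2 hC hbC.le)

end IsNested

theorem stmt3 (B : Finset (Finset V)) (hB : IsBuildingSet B)
    (N : Finset (Finset V)) (hN : IsNested B N)
    (b : Finset V) (hb : b ∈ B) (hnotmax : ∃ C ∈ B, b ⊂ C) :
    (∃ C ∈ N, b ⊂ C) ∧
    (∀ C ∈ N, b ⊂ C → ∀ C' ∈ N, b ⊂ C' → C ⊆ C' ∨ C' ⊆ C) ∧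
    (∃ M ∈ N, b ⊂ M ∧ ∀ C ∈ N, b ⊂ C → M ⊆ C) := by
  have hchain := hN.isChain_ssupersets hB (hB.1 b hb)
  obtain ⟨C, hC, hbC⟩ := hN.exists_mem_ssuperset hb hnotmax
  obtain ⟨M, hM, hMleast⟩ :=
    Finset.exists_isLeast_of_isChain ⟨C, Finset.mem_filter.2 ⟨hC, hbC⟩⟩ hchain
  simp only [Finset.coe_filter] at hM hMleast
  refine ⟨⟨C, hC, hbC⟩, fun C hC hbC C' hC' hbC' => ?_, M, hM.1, hM.2,
    fun C hC hbC => hMleast ⟨hC, hbC⟩⟩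
  exact hchain.total (by simp [hC, hbC]) (by simp [hC', hbC'])
end

section
/- Let B be a building set on a finite ground set V, let N be a B-nested set, and let B₀ ∈ B \ N be a block that is not a maximal element of B. Then the unique inclusion-minimal element M of {C ∈ N : B₀ ⊊ C} satisfies: M is the union of all C ∈ N whose root r(C,N) = C \ ⋃{D ∈ N : D ⊊ C} intersects B₀; in particular M is the unique inclusion-maximal element of {C ∈ N : r(C,N) ∩ B₀ ≠ ∅}. -/
open scoped Classical

variable {V : Type*} [Fintype V] [DecidableEq V]

lemma nested_chain {B N : Finset (Finset V)} (hB : IsBuildingSet B) (hN : IsNested B N)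
    {C D : Finset V} (hC : C ∈ N) (hD : D ∈ N) (h : (C ∩ D).Nonempty) : C ⊆ D ∨ D ⊆ C := by
  have hU : C ∪ D ∈ B := hB.2.1 C (hN.1 hC) D (hN.1 hD) h
  have hX : ({C, D} : Finset (Finset V)) ⊆ N := by
    intro x hx; simp at hx; rcases hx with h|h <;> subst h <;> assumption
  have hsup : ({C, D} : Finset (Finset V)).sup id = C ∪ D := by
    simp [Finset.sup_insert]
  have hmem := hN.2.2 {C, D} hX (by rw [hsup]; exact hU)
  rw [hsup] at hmem
  simp only [Finset.mem_insert, Finset.mem_singleton] at hmem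
  rcases hmem with h|h
  · right; exact Finset.union_eq_left.mp h
  · left; exact Finset.union_eq_right.mp h

lemma union_mem_aux {B : Finset (Finset V)} (hB : IsBuildingSet B) {b : Finset V} (hb : b ∈ B)
    (S : Finset (Finset V)) (hS : ∀ D ∈ S, D ∈ B ∧ (D ∩ b).Nonempty) :
    b ∪ S.sup id ∈ B := by
  induction S using Finset.induction_on with
  | empty => simpa using hb
  | @insert a s ha ih =>
    have hih : b ∪ s.sup id ∈ B := ih (fun D hD => hS D (Finset.mem_insert_of_mem hD))
    have haB : a ∈ B := (hS a (Finset.mem_insert_self a s)).1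
    obtain ⟨v, hv⟩ := (hS a (Finset.mem_insert_self a s)).2
    rw [Finset.mem_inter] at hv
    have hint : ((b ∪ s.sup id) ∩ a).Nonempty :=
      ⟨v, Finset.mem_inter.mpr ⟨Finset.mem_union_left _ hv.2, hv.1⟩⟩
    have := hB.2.1 _ hih _ haB hint
    have heq : b ∪ (insert a s).sup id = (b ∪ s.sup id) ∪ a := by
      simp only [Finset.sup_insert, id_eq, Finset.sup_eq_union]
      ac_rfl
    rwa [heq]

theorem stmt4 (B : Finset (Finset V)) (hB : IsBuildingSet B)
    (N : Finset (Finset V)) (hN : IsNested B N)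
    (b : Finset V) (hb : b ∈ B) (hbN : b ∉ N) (hnotmax : ∃ C ∈ B, b ⊂ C)
    (M : Finset V) (hMmem : M ∈ N) (hMsup : b ⊂ M)
    (hMmin : ∀ C ∈ N, b ⊂ C → M ⊆ C) :
    M = (N.filter (fun C => (root N C ∩ b).Nonempty)).sup id ∧
    (root N M ∩ b).Nonempty ∧
    (∀ C ∈ N, (root N C ∩ b).Nonempty → C ⊆ M) := by
  have hbne : b.Nonempty := hB.1 b hb
  have h3 : ∀ C ∈ N, (root N C ∩ b).Nonempty → C ⊆ M := by
    intro C hC hroot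
    obtain ⟨v, hv⟩ := hroot
    rw [Finset.mem_inter] at hv
    have hvroot := hv.1
    rw [root, Finset.mem_sdiff] at hvroot
    have hvM : v ∈ M := hMsup.1 hv.2
    rcases nested_chain hB hN hC hMmem ⟨v, Finset.mem_inter.mpr ⟨hvroot.1, hvM⟩⟩ with h|h
    · exact h
    · rcases h.ssubset_or_eq with h'|h'
      swap
      · exact h'.ge
      · exfalso
        apply hvroot.2
        rw [Finset.mem_sup]
        exact ⟨M, Finset.mem_filter.mpr ⟨hMmem, h'⟩, hvM⟩
  have h2 : (root N M ∩ b).Nonempty := by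
    by_contra hcon
    rw [Finset.not_nonempty_iff_eq_empty] at hcon
    set X := N.filter (fun D => D ⊂ M ∧ (D ∩ b).Nonempty) with hXdef
    have hbsub : b ⊆ X.sup id := by
      intro v hv
      have hvM : v ∈ M := hMsup.1 hv
      have hvnr : v ∉ root N M := by
        intro h
        have : v ∈ root N M ∩ b := Finset.mem_inter.mpr ⟨h, hv⟩
        rw [hcon] at this
        exact absurd this (Finset.notMem_empty v)
      rw [root, Finset.mem_sdiff] at hvnr
      push_neg at hvnr
      have hvD := hvnr hvM
      rw [Finset.mem_sup] at hvD
      obtain ⟨D, hD, hvD⟩ := hvD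
      rw [Finset.mem_filter] at hD
      rw [Finset.mem_sup]
      exact ⟨D, Finset.mem_filter.mpr ⟨hD.1, hD.2, ⟨v, Finset.mem_inter.mpr ⟨hvD, hv⟩⟩⟩, hvD⟩
    have hUB : b ∪ X.sup id ∈ B := by
      apply union_mem_aux hB hb
      intro D hD
      rw [hXdef, Finset.mem_filter] at hD
      exact ⟨hN.1 hD.1, hD.2.2⟩
    rw [Finset.union_eq_right.mpr hbsub] at hUB
    have hmem := hN.2.2 X (Finset.filter_subset _ _) hUB
    rw [hXdef, Finset.mem_filter] at hmem
    have hbss : b ⊂ X.sup id := by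
      refine Finset.ssubset_iff_subset_ne.mpr ⟨hbsub, ?_⟩
      intro h
      exact hbN (h ▸ hmem.1)
    exact absurd (hMmin _ hmem.1 hbss) (by
      intro h
      exact (hmem.2.1.2 h))
  refine ⟨?_, h2, h3⟩
  apply le_antisymm
  · exact Finset.le_sup (f := id) (Finset.mem_filter.mpr ⟨hMmem, h2⟩)
  · exact Finset.sup_le (fun C hC => h3 C (Finset.mem_filter.mp hC).1 (Finset.mem_filter.mp hC).2)
end

section
/- Let B be a building set on a finite ground set V and let P ∈ B. If B₀ and B₀' are two distinct inclusion-maximal blocks of B strictly contained in P, then (B₀, B₀', P) is an exchange frame: B₀ and B₀' are exchangeable via two adjacent maximal B-nested sets whose exchange has parent P. -/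
open scoped Classical

variable {V : Type*} [Fintype V] [DecidableEq V]

namespace Stmt7Aux

open Finset

variable {B : Finset (Finset V)}

lemma bs_union (hB : IsBuildingSet B) {s t : Finset V} (hs : s ∈ B) (ht : t ∈ B)
    (h : (s ∩ t).Nonempty) : s ∪ t ∈ B := hB.2.1 s hs t ht h

lemma sup_pair (E F : Finset V) : ({E, F} : Finset (Finset V)).sup id = E ∪ F := by
  simp [Finset.sup_insert, Finset.sup_singleton, Finset.sup_eq_union]

lemma mem_sup_id {X : Finset (Finset V)} {v : V} : v ∈ X.sup id ↔ ∃ E ∈ X, v ∈ E := by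
  simp [Finset.mem_sup]

lemma nested_pairwise (hB : IsBuildingSet B) {N : Finset (Finset V)} (hN : IsNested B N)
    {E F : Finset V} (hE : E ∈ N) (hF : F ∈ N) (hmeet : (E ∩ F).Nonempty) :
    E ⊆ F ∨ F ⊆ E := by
  rcases eq_or_ne E F with rfl | hne
  · exact Or.inl subset_rfl
  have hX : ({E, F} : Finset (Finset V)) ⊆ N := by
    intro x hx
    rcases Finset.mem_insert.mp hx with rfl | hx
    · exact hE
    · rw [Finset.mem_singleton] at hx; subst hx; exact hF
  have hsup : ({E, F} : Finset (Finset V)).sup id = E ∪ F := sup_pair E F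
  have hmem : E ∪ F ∈ B := bs_union hB (hN.1 hE) (hN.1 hF) hmeet
  have hin := hN.2.2 _ hX (by rw [hsup]; exact hmem)
  rw [hsup] at hin
  rcases Finset.mem_insert.mp hin with h | h
  · exact Or.inr (by rw [← h]; exact Finset.subset_union_right)
  · rw [Finset.mem_singleton] at h
    exact Or.inl (by rw [← h]; exact Finset.subset_union_left)

def PWDisj (X : Finset (Finset V)) : Prop := ∀ E ∈ X, ∀ F ∈ X, E ≠ F → E ∩ F = ∅

lemma nested_of_pairwise (hB : IsBuildingSet B) {M : Finset (Finset V)}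
    (hMB : M ⊆ B)
    (hmax : ∀ K ∈ B, (∀ C ∈ B, K ⊆ C → K = C) → K ∈ M)
    (hpair : ∀ E ∈ M, ∀ F ∈ M, (E ∩ F).Nonempty → E ⊆ F ∨ F ⊆ E)
    (hdisj : ∀ X ⊆ M, PWDisj X → X.sup id ∈ B → X.sup id ∈ X) :
    IsNested B M := by
  refine ⟨hMB, hmax, ?_⟩
  intro X hXM hS
  set Y := X.filter (fun E => ∀ F ∈ X, E ⊆ F → E = F) with hYdef
  have hYX : Y ⊆ X := Finset.filter_subset _ _
  have hcov : ∀ E ∈ X, ∃ F ∈ Y, E ⊆ F := by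
    intro E hE
    set s := X.filter (fun F => E ⊆ F) with hsdef
    have hsne : s.Nonempty := ⟨E, by simp [hsdef, hE]⟩
    obtain ⟨F, hFs, hmaxF⟩ := Finset.exists_max_image s (fun C => C.card) hsne
    rw [hsdef, Finset.mem_filter] at hFs
    refine ⟨F, Finset.mem_filter.mpr ⟨hFs.1, ?_⟩, hFs.2⟩
    intro G hG hFG
    exact Finset.eq_of_subset_of_card_le hFG
      (hmaxF G (by rw [hsdef, Finset.mem_filter]; exact ⟨hG, hFs.2.trans hFG⟩))
  have hsup : Y.sup id = X.sup id := by
    apply le_antisymm (Finset.sup_mono hYX)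
    apply Finset.sup_le
    intro E hE
    obtain ⟨F, hF, hEF⟩ := hcov E hE
    exact le_trans hEF (Finset.le_sup (f := id) hF)
  have hYd : PWDisj Y := by
    intro E hE F hF hne
    by_contra h
    have hmeet : (E ∩ F).Nonempty := Finset.nonempty_iff_ne_empty.mpr h
    rcases hpair E (hXM (hYX hE)) F (hXM (hYX hF)) hmeet with hEF | hFE
    · exact hne ((Finset.mem_filter.mp hE).2 F (hYX hF) hEF)
    · exact hne (((Finset.mem_filter.mp hF).2 E (hYX hE) hFE).symm)
  have hmem := hdisj Y (hYX.trans hXM) hYd (by rw [hsup]; exact hS)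
  rw [hsup] at hmem
  exact hYX hmem

lemma cc_mem_iff {U E : Finset V} :
    E ∈ ccSet B U ↔ E ∈ B ∧ E ⊆ U ∧ ∀ C ∈ B, C ⊆ U → E ⊆ C → E = C := by
  simp [ccSet, Finset.mem_filter, and_assoc]

lemma cc_disj (hB : IsBuildingSet B) {U E F : Finset V}
    (hE : E ∈ ccSet B U) (hF : F ∈ ccSet B U) (hne : E ≠ F) : E ∩ F = ∅ := by
  by_contra h
  have hmeet : (E ∩ F).Nonempty := Finset.nonempty_iff_ne_empty.mpr h
  obtain ⟨hEB, hEU, hEmax⟩ := cc_mem_iff.mp hE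
  obtain ⟨hFB, hFU, hFmax⟩ := cc_mem_iff.mp hF
  have hu : E ∪ F ∈ B := bs_union hB hEB hFB hmeet
  have h1 : E = E ∪ F := hEmax _ hu (Finset.union_subset hEU hFU) Finset.subset_union_left
  have h2 : F = E ∪ F := hFmax _ hu (Finset.union_subset hEU hFU) Finset.subset_union_right
  exact hne (h1.trans h2.symm)

lemma cc_cover (hB : IsBuildingSet B) {U : Finset V} {v : V} (hv : v ∈ U) :
    ∃ E ∈ ccSet B U, v ∈ E := by
  set s := B.filter (fun C => v ∈ C ∧ C ⊆ U) with hsdef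
  have hsne : s.Nonempty :=
    ⟨{v}, by simp [hsdef, hB.2.2 v, Finset.singleton_subset_iff.mpr hv]⟩
  obtain ⟨E, hEs, hmaxE⟩ := Finset.exists_max_image s (fun C => C.card) hsne
  rw [hsdef, Finset.mem_filter] at hEs
  refine ⟨E, cc_mem_iff.mpr ⟨hEs.1, hEs.2.2, ?_⟩, hEs.2.1⟩
  intro C hC hCU hEC
  exact Finset.eq_of_subset_of_card_le hEC
    (hmaxE C (by rw [hsdef, Finset.mem_filter]; exact ⟨hC, hEC hEs.2.1, hCU⟩))

noncomputable def maxBlocks (B : Finset (Finset V)) : Finset (Finset V) :=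
  B.filter (fun K => ∀ C ∈ B, K ⊆ C → K = C)

lemma base_nested (hB : IsBuildingSet B) {P : Finset V} (hP : P ∈ B)
    {T : Finset (Finset V)} (hTB : T ⊆ B)
    (hTP : ∀ E ∈ T, E ⊆ P)
    (hTpair : ∀ E ∈ T, ∀ F ∈ T, (E ∩ F).Nonempty → E ⊆ F ∨ F ⊆ E)
    (hTdisj : ∀ X ⊆ T, PWDisj X → X.sup id ∈ B → X.sup id ∈ X) :
    IsNested B (insert P (maxBlocks B) ∪ T) := by
  have hmem : ∀ E, E ∈ insert P (maxBlocks B) ∪ T ↔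
      E = P ∨ E ∈ maxBlocks B ∨ E ∈ T := by
    intro E
    simp [Finset.mem_union, Finset.mem_insert, or_assoc]
  have hMB : insert P (maxBlocks B) ∪ T ⊆ B := by
    intro E hE
    rcases (hmem E).mp hE with rfl | h | h
    · exact hP
    · exact (Finset.filter_subset _ _) h
    · exact hTB h
  have hmaxabs : ∀ E ∈ maxBlocks B, ∀ F ∈ B, (E ∩ F).Nonempty → F ⊆ E := by
    intro E hE F hF hmeet
    rw [maxBlocks, Finset.mem_filter] at hE
    have hu : E ∪ F ∈ B := bs_union hB hE.1 hF hmeet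
    have heq := hE.2 (E ∪ F) hu Finset.subset_union_left
    intro v hv
    rw [heq]
    exact Finset.mem_union_right _ hv
  apply nested_of_pairwise hB hMB
  · intro K hK hKmax
    exact (hmem K).mpr (Or.inr (Or.inl (Finset.mem_filter.mpr ⟨hK, hKmax⟩)))
  · intro E hE F hF hmeet
    rcases (hmem E).mp hE with rfl | hEm | hET
    · rcases (hmem F).mp hF with rfl | hFm | hFT
      · exact Or.inl subset_rfl
      · exact Or.inl (hmaxabs F hFm E hP (by rwa [Finset.inter_comm] at hmeet))
      · exact Or.inr (hTP F hFT)
    · exact Or.inr (hmaxabs E hEm F (hMB hF) hmeet)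
    · rcases (hmem F).mp hF with rfl | hFm | hFT
      · exact Or.inl (hTP E hET)
      · exact Or.inl (hmaxabs F hFm E (hMB hE) (by rwa [Finset.inter_comm] at hmeet))
      · exact hTpair E hET F hFT hmeet
  · intro X hXM hpwd hS
    by_cases hMX : ∃ E ∈ X, E ∈ maxBlocks B
    · obtain ⟨E, hEX, hEm⟩ := hMX
      have hES : E ⊆ X.sup id := Finset.le_sup (f := id) hEX
      have heq := (Finset.mem_filter.mp hEm).2 (X.sup id) hS hES
      rw [← heq]
      exact hEX
    · push_neg at hMX
      have hsubP : ∀ E ∈ X, E ⊆ P := by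
        intro E hEX
        rcases (hmem E).mp (hXM hEX) with rfl | h | h
        · exact subset_rfl
        · exact absurd h (hMX E hEX)
        · exact hTP E h
      by_cases hPX : P ∈ X
      · have heq : X.sup id = P :=
          le_antisymm (Finset.sup_le hsubP) (Finset.le_sup (f := id) hPX)
        rw [heq]; exact hPX
      · have hXT : X ⊆ T := by
          intro E hEX
          rcases (hmem E).mp (hXM hEX) with rfl | h | h
          · exact absurd hEX hPX
          · exact absurd h (hMX E hEX)
          · exact h
        exact hTdisj X hXT hpwd hS


lemma main_max (hB : IsBuildingSet B) {P b b' : Finset V} (hP : P ∈ B)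
    (hb : MaxIn B P b) (hb' : MaxIn B P b') (hne : b ≠ b')
    {C : Finset (Finset V)} (hCB : C ⊆ B) (hPC : P ∈ C) (hbC : b ∉ C) (hb'C : b' ∉ C)
    (G1 : IsNested B (insert b C)) (G2 : IsNested B (insert b' C))
    (Gmax : ∀ D : Finset (Finset V), D ⊆ B → IsNested B (insert b D) →
      IsNested B (insert b' D) → b ∉ D → b' ∉ D → C ⊆ D → D.card ≤ C.card)
    (H1 : ∀ N₁ : Finset (Finset V), IsNested B N₁ → C ⊆ N₁ → b ∈ N₁ → b' ∈ N₁ → False)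
    (H3 : ∀ N₁ : Finset (Finset V), IsNested B N₁ → C ⊆ N₁ → b ∈ N₁ →
      ∀ W ⊆ N₁, (∀ E ∈ W, E ⊆ b ∧ E ≠ b) → b \ b' ⊆ W.sup id → False) :
    IsMaxNested B (insert b C) := by
  refine ⟨G1, ?_⟩
  intro N₁ hN₁ hsub
  refine Finset.Subset.antisymm hsub (fun A hA => ?_)
  by_contra hAN
  -- basic facts
  have hbN₁ : b ∈ N₁ := hsub (Finset.mem_insert_self _ _)
  have hCN₁ : C ⊆ N₁ := (Finset.subset_insert _ _).trans hsub
  have hAB : A ∈ B := hN₁.1 hA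
  have hAne_b : A ≠ b := fun h => hAN (h ▸ Finset.mem_insert_self b C)
  have hAne_b' : A ≠ b' := fun h => H1 N₁ hN₁ hCN₁ hbN₁ (h ▸ hA)
  have hAC : A ∉ C := fun h => hAN (Finset.mem_insert_of_mem h)
  have hbne : b.Nonempty := hB.1 b hb.1
  have hb'ne : b'.Nonempty := hB.1 b' hb'.1
  have hPne : P.Nonempty := hB.1 P hP
  have hAne : A.Nonempty := hB.1 A hAB
  have hnsub : ¬ b ⊆ b' := by
    intro h
    exact hb.2.2 b' hb'.1 (h.ssubset_of_ne hne) hb'.2.1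
  have hnsub' : ¬ b' ⊆ b := by
    intro h
    exact hb'.2.2 b hb.1 (h.ssubset_of_ne hne.symm) hb.2.1
  have hbP : b ⊂ P := hb.2.1
  have hb'P : b' ⊂ P := hb'.2.1
  have hcond2C : ∀ K ∈ B, (∀ C' ∈ B, K ⊆ C' → K = C') → K ∈ C := by
    intro K hK hKmax
    have hmem := G1.2.1 K hK hKmax
    rcases Finset.mem_insert.mp hmem with rfl | h
    · exact absurd (hKmax P hP hbP.subset) hbP.ne
    · exact h
  have hIACN₁ : insert A C ⊆ N₁ := Finset.insert_subset_iff.mpr ⟨hA, hCN₁⟩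
  have hIAC : IsNested B (insert A C) := by
    refine ⟨?_, ?_, ?_⟩
    · intro E hE
      rcases Finset.mem_insert.mp hE with rfl | h
      · exact hAB
      · exact hCB h
    · intro K hK hKm
      exact Finset.mem_insert_of_mem (hcond2C K hK hKm)
    · intro X hX hS
      exact hN₁.2.2 X (hX.trans hIACN₁) hS
  -- A is compatible with b'
  have hAb'compat : (A ∩ b').Nonempty → A ⊆ b' ∨ b' ⊆ A := by
    intro hmeet
    have hAP : A ⊆ P ∨ P ⊆ A := by
      refine nested_pairwise hB hN₁ hA (hCN₁ hPC) ?_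
      obtain ⟨v, hv⟩ := hmeet
      exact ⟨v, Finset.mem_inter.mpr ⟨(Finset.mem_inter.mp hv).1,
        hb'P.subset (Finset.mem_inter.mp hv).2⟩⟩
    rcases hAP with hAP | hPA
    · by_cases hsub2 : A ⊆ b'
      · exact Or.inl hsub2
      · have hu : A ∪ b' ∈ B := bs_union hB hAB hb'.1 hmeet
        have hss : b' ⊂ A ∪ b' := by
          refine Finset.ssubset_iff_of_subset Finset.subset_union_right |>.mpr ?_
          obtain ⟨v, hv1, hv2⟩ := Finset.not_subset.mp hsub2
          exact ⟨v, Finset.mem_union_left _ hv1, hv2⟩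
        have hup : A ∪ b' = P := by
          by_contra hne2
          exact hb'.2.2 _ hu hss
            (((Finset.union_subset hAP hb'P.subset)).ssubset_of_ne hne2)
        have hPbA : b \ b' ⊆ A := by
          intro v hv
          have hvP : v ∈ P := hbP.subset (Finset.mem_sdiff.mp hv).1
          rw [← hup] at hvP
          rcases Finset.mem_union.mp hvP with h | h
          · exact h
          · exact absurd h (Finset.mem_sdiff.mp hv).2
        have hbb'ne : (b \ b').Nonempty := by
          obtain ⟨v, hv1, hv2⟩ := Finset.not_subset.mp hnsub
          exact ⟨v, Finset.mem_sdiff.mpr ⟨hv1, hv2⟩⟩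
        have hAb : A ⊆ b ∨ b ⊆ A := by
          refine nested_pairwise hB hN₁ hA hbN₁ ?_
          obtain ⟨v, hv⟩ := hbb'ne
          exact ⟨v, Finset.mem_inter.mpr ⟨hPbA hv, (Finset.mem_sdiff.mp hv).1⟩⟩
        rcases hAb with hAb | hbA
        · exfalso
          refine H3 N₁ hN₁ hCN₁ hbN₁ {A} (Finset.singleton_subset_iff.mpr hA) ?_ ?_
          · intro E hE
            rw [Finset.mem_singleton] at hE
            subst hE
            exact ⟨hAb, hAne_b⟩
          · rw [Finset.sup_singleton]
            exact hPbA
        · have hAeqP : A = P := by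
            by_contra hne2
            exact hb.2.2 A hAB (hbA.ssubset_of_ne (Ne.symm hAne_b))
              (hAP.ssubset_of_ne hne2)
          exact Or.inr (hAeqP ▸ hb'P.subset)
    · exact Or.inr (hb'P.subset.trans hPA)
  -- the set insert b' (insert A C) is nested
  have hM : IsNested B (insert b' (insert A C)) := by
    apply nested_of_pairwise hB
    · intro E hE
      rcases Finset.mem_insert.mp hE with rfl | hE
      · exact hb'.1
      · exact hIAC.1 hE
    · intro K hK hKm
      exact Finset.mem_insert_of_mem (Finset.mem_insert_of_mem (hcond2C K hK hKm))
    · intro E hE F hF hmeet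
      rcases Finset.mem_insert.mp hE with rfl | hE2
      · rcases Finset.mem_insert.mp hF with rfl | hF2
        · exact Or.inl subset_rfl
        · rcases Finset.mem_insert.mp hF2 with rfl | hF3
          · rcases hAb'compat (by rwa [Finset.inter_comm] at hmeet) with h | h
            · exact Or.inr h
            · exact Or.inl h
          · exact nested_pairwise hB G2 (Finset.mem_insert_self _ _)
              (Finset.mem_insert_of_mem hF3) hmeet
      · rcases Finset.mem_insert.mp hF with rfl | hF2
        · rcases Finset.mem_insert.mp hE2 with rfl | hE3
          · exact hAb'compat hmeet
          · exact nested_pairwise hB G2 (Finset.mem_insert_of_mem hE3)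
              (Finset.mem_insert_self _ _) hmeet
        · exact nested_pairwise hB hN₁ (hIACN₁ hE2) (hIACN₁ hF2) hmeet
    · intro X hXM hpwd hS
      by_cases hb'X : b' ∈ X
      · by_cases hAX : A ∈ X
        · exfalso
          -- the key contradiction
          have hAb'd : A ∩ b' = ∅ := hpwd A hAX b' hb'X hAne_b'
          have helt : ∀ E ∈ X, E ≠ b' → E ∈ insert A C := by
            intro E hE hne2
            rcases Finset.mem_insert.mp (hXM hE) with rfl | h
            · exact absurd rfl hne2
            · exact h
          have hdichot : ∀ E ∈ X, E ⊆ P ∨ E ∩ P = ∅ := by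
            intro E hE
            by_cases hEb' : E = b'
            · exact Or.inl (by rw [hEb']; exact hb'P.subset)
            · have hEN₁ : E ∈ N₁ := hIACN₁ (helt E hE hEb')
              by_cases hmeet : (E ∩ P).Nonempty
              · rcases nested_pairwise hB hN₁ hEN₁ (hCN₁ hPC) hmeet with h | h
                · exact Or.inl h
                · exfalso
                  have hd := hpwd E hE b' hb'X hEb'
                  obtain ⟨v, hv⟩ := hb'ne
                  have : v ∈ E ∩ b' :=
                    Finset.mem_inter.mpr ⟨h (hb'P.subset hv), hv⟩
                  rw [hd] at this
                  exact absurd this (Finset.notMem_empty v)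
              · exact Or.inr (Finset.not_nonempty_iff_eq_empty.mp hmeet)
          have hb'S : b' ⊆ X.sup id := Finset.le_sup (f := id) hb'X
          have hAS : A ⊆ X.sup id := Finset.le_sup (f := id) hAX
          -- step 2 : X.sup id ⊆ P
          have hSP : X.sup id ⊆ P := by
            set Xout := X.filter (fun E => E ∩ P = ∅) with hXoutdef
            have hX''sub : insert P Xout ⊆ insert A C := by
              intro E hE
              rcases Finset.mem_insert.mp hE with rfl | hE
              · exact Finset.mem_insert_of_mem hPC
              · have hE' := Finset.mem_filter.mp hE
                refine helt E hE'.1 ?_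
                intro h
                rw [h] at hE'
                obtain ⟨v, hv⟩ := hb'ne
                have hvm : v ∈ b' ∩ P := Finset.mem_inter.mpr ⟨hv, hb'P.subset hv⟩
                rw [hE'.2] at hvm
                exact absurd hvm (Finset.notMem_empty v)
            have hsupX'' : (insert P Xout).sup id = P ∪ X.sup id := by
              apply le_antisymm
              · apply Finset.sup_le
                intro E hE
                rcases Finset.mem_insert.mp hE with rfl | hE
                · exact Finset.subset_union_left
                · exact (Finset.le_sup (f := id) ((Finset.filter_subset _ _) hE)).trans
                    Finset.subset_union_right
              · intro v hv
                rcases Finset.mem_union.mp hv with h | h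
                · exact mem_sup_id.mpr ⟨P, Finset.mem_insert_self _ _, h⟩
                · obtain ⟨E, hEX, hvE⟩ := mem_sup_id.mp h
                  rcases hdichot E hEX with h2 | h2
                  · exact mem_sup_id.mpr ⟨P, Finset.mem_insert_self _ _, h2 hvE⟩
                  · exact mem_sup_id.mpr ⟨E, Finset.mem_insert_of_mem
                      (Finset.mem_filter.mpr ⟨hEX, h2⟩), hvE⟩
            have hPS : P ∪ X.sup id ∈ B := by
              apply bs_union hB hP hS
              obtain ⟨v, hv⟩ := hb'ne
              exact ⟨v, Finset.mem_inter.mpr ⟨hb'P.subset hv, hb'S hv⟩⟩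
            have hmem2 := hN₁.2.2 (insert P Xout) (hX''sub.trans hIACN₁)
              (by rw [hsupX'']; exact hPS)
            rw [hsupX''] at hmem2
            rcases Finset.mem_insert.mp hmem2 with h | h
            · intro v hv
              rw [← h]
              exact Finset.mem_union_right _ hv
            · exfalso
              have hE' := Finset.mem_filter.mp h
              obtain ⟨v, hv⟩ := hPne
              have : v ∈ (P ∪ X.sup id) ∩ P :=
                Finset.mem_inter.mpr ⟨Finset.mem_union_left _ hv, hv⟩
              rw [hE'.2] at this
              exact absurd this (Finset.notMem_empty v)
          -- step 3 : X.sup id = P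
          have hSeqP : X.sup id = P := by
            by_contra hne2
            have hbS' : b' ⊂ X.sup id := by
              refine hb'S.ssubset_of_ne ?_
              intro h
              obtain ⟨v, hv⟩ := hAne
              have : v ∈ A ∩ b' := Finset.mem_inter.mpr ⟨hv, h ▸ hAS hv⟩
              rw [hAb'd] at this
              exact absurd this (Finset.notMem_empty v)
            exact hb'.2.2 _ hS hbS' (hSP.ssubset_of_ne hne2)
          -- step 4 : the W argument
          have hbnotM : b ∉ insert b' (insert A C) := by
            intro h
            rcases Finset.mem_insert.mp h with h | h
            · exact hne h
            · rcases Finset.mem_insert.mp h with h | h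
              · exact hAne_b h.symm
              · exact hbC h
          set W := X.filter (fun E => E ⊆ b) with hWdef
          have hWprop : ∀ E ∈ W, E ⊆ b ∧ E ≠ b := by
            intro E hE
            have h1 := (Finset.mem_filter.mp hE).2
            refine ⟨h1, ?_⟩
            intro h
            exact hbnotM (h ▸ hXM (Finset.mem_filter.mp hE).1)
          have hWN₁ : W ⊆ N₁ := by
            intro E hE
            have hEb := (Finset.mem_filter.mp hE).2
            have hEX := (Finset.mem_filter.mp hE).1
            have hEneb' : E ≠ b' := by
              intro h
              exact hnsub' (h ▸ hEb)
            exact hIACN₁ (helt E hEX hEneb')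
          have hcov : b \ b' ⊆ W.sup id := by
            intro v hv
            have hvb := (Finset.mem_sdiff.mp hv).1
            have hvS : v ∈ X.sup id := by rw [hSeqP]; exact hbP.subset hvb
            obtain ⟨E, hEX, hvE⟩ := mem_sup_id.mp hvS
            have hEneb' : E ≠ b' := fun h => (Finset.mem_sdiff.mp hv).2 (h ▸ hvE)
            have hEN₁ : E ∈ N₁ := hIACN₁ (helt E hEX hEneb')
            rcases nested_pairwise hB hN₁ hEN₁ hbN₁
                ⟨v, Finset.mem_inter.mpr ⟨hvE, hvb⟩⟩ with h | h
            · exact mem_sup_id.mpr ⟨E, Finset.mem_filter.mpr ⟨hEX, h⟩, hvE⟩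
            · exfalso
              have hEP : E ⊆ P := by
                rw [← hSeqP]
                exact Finset.le_sup (f := id) hEX
              have hEne_b : E ≠ b := by
                intro h2
                exact hbnotM (h2 ▸ hXM hEX)
              have hEeqP : E = P := by
                by_contra hne3
                exact hb.2.2 E (hN₁.1 hEN₁) (h.ssubset_of_ne (Ne.symm hEne_b))
                  (hEP.ssubset_of_ne hne3)
              have hd := hpwd E hEX b' hb'X hEneb'
              obtain ⟨u, hu⟩ := hb'ne
              have : u ∈ E ∩ b' :=
                Finset.mem_inter.mpr ⟨hEeqP ▸ hb'P.subset hu, hu⟩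
              rw [hd] at this
              exact absurd this (Finset.notMem_empty u)
          exact H3 N₁ hN₁ hCN₁ hbN₁ W hWN₁ hWprop hcov
        · -- A ∉ X : X ⊆ insert b' C
          have hXsub : X ⊆ insert b' C := by
            intro E hE
            rcases Finset.mem_insert.mp (hXM hE) with rfl | hE2
            · exact Finset.mem_insert_self _ _
            · rcases Finset.mem_insert.mp hE2 with rfl | hE3
              · exact absurd hE hAX
              · exact Finset.mem_insert_of_mem hE3
          exact G2.2.2 X hXsub hS
      · have hXsub : X ⊆ insert A C := by
          intro E hE
          rcases Finset.mem_insert.mp (hXM hE) with rfl | hE2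
          · exact absurd hE hb'X
          · exact hE2
        exact hIAC.2.2 X hXsub hS
  -- now contradiction with maximal cardinality
  have hGb : IsNested B (insert b (insert A C)) := by
    rw [Finset.insert_comm]
    refine ⟨?_, ?_, ?_⟩
    · intro E hE
      rcases Finset.mem_insert.mp hE with rfl | hE
      · exact hAB
      · exact G1.1 hE
    · intro K hK hKm
      exact Finset.mem_insert_of_mem (G1.2.1 K hK hKm)
    · intro X hX hS
      refine hN₁.2.2 X (hX.trans ?_) hS
      exact Finset.insert_subset_iff.mpr ⟨hA, hsub⟩
  have hcard := Gmax (insert A C)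
    (fun E hE => hIAC.1 hE) hGb hM
    (by
      intro h
      rcases Finset.mem_insert.mp h with h | h
      · exact hAne_b h.symm
      · exact hbC h)
    (by
      intro h
      rcases Finset.mem_insert.mp h with h | h
      · exact hAne_b' h.symm
      · exact hb'C h)
    (Finset.subset_insert _ _)
  rw [Finset.card_insert_of_notMem hAC] at hcard
  omega


lemma build_and_finish (hB : IsBuildingSet B) {P b b' : Finset V} (hP : P ∈ B)
    (hb : MaxIn B P b) (hb' : MaxIn B P b') (hne : b ≠ b')
    {C₀ : Finset (Finset V)} (hC₀B : C₀ ⊆ B) (hPC₀ : P ∈ C₀)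
    (hbC₀ : b ∉ C₀) (hb'C₀ : b' ∉ C₀)
    (Gb₀ : IsNested B (insert b C₀)) (Gb'₀ : IsNested B (insert b' C₀))
    (H1gen : ∀ N₁ : Finset (Finset V), IsNested B N₁ → C₀ ⊆ N₁ → b ∈ N₁ → b' ∈ N₁ → False)
    (H3gen : ∀ N₁ : Finset (Finset V), IsNested B N₁ → C₀ ⊆ N₁ → b ∈ N₁ →
      ∀ W ⊆ N₁, (∀ E ∈ W, E ⊆ b ∧ E ≠ b) → b \ b' ⊆ W.sup id → False)
    (H3gen' : ∀ N₁ : Finset (Finset V), IsNested B N₁ → C₀ ⊆ N₁ → b' ∈ N₁ →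
      ∀ W ⊆ N₁, (∀ E ∈ W, E ⊆ b' ∧ E ≠ b') → b' \ b ⊆ W.sup id → False) :
    IsExchangeFrame B b b' P := by
  classical
  set Scand := (B.powerset).filter
    (fun D => IsNested B (insert b D) ∧ IsNested B (insert b' D) ∧ b ∉ D ∧ b' ∉ D ∧ C₀ ⊆ D)
    with hScand
  have hC₀mem : C₀ ∈ Scand := by
    rw [hScand, Finset.mem_filter, Finset.mem_powerset]
    exact ⟨hC₀B, Gb₀, Gb'₀, hbC₀, hb'C₀, subset_rfl⟩
  obtain ⟨C, hCmem, hCmax⟩ := Finset.exists_max_image Scand (fun D => D.card) ⟨C₀, hC₀mem⟩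
  rw [hScand, Finset.mem_filter, Finset.mem_powerset] at hCmem
  obtain ⟨hCB, G1, G2, hbC, hb'C, hC₀C⟩ := hCmem
  have hPC : P ∈ C := hC₀C hPC₀
  have Gmax : ∀ D : Finset (Finset V), D ⊆ B → IsNested B (insert b D) →
      IsNested B (insert b' D) → b ∉ D → b' ∉ D → C ⊆ D → D.card ≤ C.card := by
    intro D h1 h2 h3 h4 h5 h6
    refine hCmax D ?_
    rw [hScand, Finset.mem_filter, Finset.mem_powerset]
    exact ⟨h1, h2, h3, h4, h5, hC₀C.trans h6⟩
  have hN := main_max hB hP hb hb' hne hCB hPC hbC hb'C G1 G2 Gmax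
    (fun N₁ h hcs h1 h2 => H1gen N₁ h (hC₀C.trans hcs) h1 h2)
    (fun N₁ h hcs h1 => H3gen N₁ h (hC₀C.trans hcs) h1)
  have hN' := main_max hB hP hb' hb hne.symm hCB hPC hb'C hbC G2 G1
    (fun D h1 h2 h3 h4 h5 h6 => Gmax D h1 h3 h2 h5 h4 h6)
    (fun N₁ h hcs h1 h2 => H1gen N₁ h (hC₀C.trans hcs) h2 h1)
    (fun N₁ h hcs h1 => H3gen' N₁ h (hC₀C.trans hcs) h1)
  refine ⟨insert b C, insert b' C, hN, hN', Finset.mem_insert_self _ _,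
    Finset.mem_insert_self _ _, hne, ?_, ?_⟩
  · rw [Finset.erase_insert hbC, Finset.erase_insert hb'C]
  · refine ⟨Finset.mem_insert_of_mem hPC, hb.2.1, ?_⟩
    intro Cc hCc hbCc
    rcases Finset.mem_insert.mp hCc with rfl | hCcC
    · exact absurd rfl (Finset.ssubset_iff_subset_ne.mp hbCc).2
    · have hmeet : (Cc ∩ P).Nonempty := by
        obtain ⟨v, hv⟩ := hB.1 b hb.1
        exact ⟨v, Finset.mem_inter.mpr ⟨hbCc.subset hv, hb.2.1.subset hv⟩⟩
      rcases nested_pairwise hB G1 (Finset.mem_insert_of_mem hCcC)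
        (Finset.mem_insert_of_mem hPC) hmeet with h | h
      · by_cases he : Cc = P
        · subst he; exact subset_rfl
        · exact absurd (h.ssubset_of_ne he) (hb.2.2 Cc (hCB hCcC) hbCc)
      · exact h

end Stmt7Aux

open Stmt7Aux in
theorem stmt7 (B : Finset (Finset V)) (hB : IsBuildingSet B)
    (P b b' : Finset V) (hP : P ∈ B)
    (hb : MaxIn B P b) (hb' : MaxIn B P b') (hne : b ≠ b') :
    IsExchangeFrame B b b' P := by

  classical
  have hbne : b.Nonempty := hB.1 b hb.1
  have hb'ne : b'.Nonempty := hB.1 b' hb'.1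
  have hnsub : ¬ b ⊆ b' := fun h => hb.2.2 b' hb'.1 (h.ssubset_of_ne hne) hb'.2.1
  have hnsub' : ¬ b' ⊆ b := fun h => hb'.2.2 b hb.1 (h.ssubset_of_ne hne.symm) hb.2.1
  have hbP : b ⊂ P := hb.2.1
  have hb'P : b' ⊂ P := hb'.2.1
  have hnotmax : ∀ {x : Finset V}, x ⊂ P → x ∉ maxBlocks B := by
    intro x hx h
    exact hx.ne ((Finset.mem_filter.mp h).2 P hP hx.subset)
  by_cases hc : b ∪ b' = P
  · -- CASE 1 : b ∪ b' = P
    have hTB : ccSet B (b ∩ b') ⊆ B := Finset.filter_subset _ _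
    have hTsub : ∀ E ∈ ccSet B (b ∩ b'), E ⊆ b ∩ b' := fun E hE => (cc_mem_iff.mp hE).2.1
    set C₀ := insert P (maxBlocks B) ∪ ccSet B (b ∩ b') with hC₀def
    have hTC₀ : ccSet B (b ∩ b') ⊆ C₀ := Finset.subset_union_right
    have hC₀B : C₀ ⊆ B := by
      intro E hE
      rcases Finset.mem_union.mp hE with h | h
      · rcases Finset.mem_insert.mp h with rfl | h
        · exact hP
        · exact (Finset.filter_subset _ _) h
      · exact hTB h
    have hPC₀ : P ∈ C₀ := Finset.mem_union_left _ (Finset.mem_insert_self _ _)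
    have hbC₀ : b ∉ C₀ := by
      intro h
      rcases Finset.mem_union.mp h with h | h
      · rcases Finset.mem_insert.mp h with h | h
        · exact hbP.ne h
        · exact hnotmax hbP h
      · exact hnsub ((hTsub b h).trans Finset.inter_subset_right)
    have hb'C₀ : b' ∉ C₀ := by
      intro h
      rcases Finset.mem_union.mp h with h | h
      · rcases Finset.mem_insert.mp h with h | h
        · exact hb'P.ne h
        · exact hnotmax hb'P h
      · exact hnsub' ((hTsub b' h).trans Finset.inter_subset_left)
    have hccpair : ∀ E ∈ ccSet B (b ∩ b'), ∀ F ∈ ccSet B (b ∩ b'),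
        (E ∩ F).Nonempty → E ⊆ F ∨ F ⊆ E := by
      intro E hE F hF hmeet
      rcases eq_or_ne E F with rfl | hEF
      · exact Or.inl subset_rfl
      · exact absurd (cc_disj hB hE hF hEF) hmeet.ne_empty
    have hccdisj : ∀ X ⊆ ccSet B (b ∩ b'), X.sup id ∈ B → X.sup id ∈ X := by
      intro X hXT hS
      obtain ⟨v, hv⟩ := hB.1 _ hS
      obtain ⟨E, hEX, hvE⟩ := mem_sup_id.mp hv
      have hcc := cc_mem_iff.mp (hXT hEX)
      have heq : E = X.sup id := hcc.2.2 _ hS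
        (Finset.sup_le (fun F hF => hTsub F (hXT hF))) (Finset.le_sup (f := id) hEX)
      rw [← heq]; exact hEX
    -- insert x C₀ is nested, for x ∈ {b, b'}, x ⊇ b ∩ b' components
    have Gboth : ∀ x : Finset V, x ∈ B → x ⊂ P → b ∩ b' ⊆ x →
        IsNested B (insert x C₀) := by
      intro x hxB hxP hbbx
      rw [hC₀def, ← Finset.union_insert]
      apply base_nested hB hP
      · intro E hE
        rcases Finset.mem_insert.mp hE with rfl | hE
        · exact hxB
        · exact hTB hE
      · intro E hE
        rcases Finset.mem_insert.mp hE with rfl | hE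
        · exact hxP.subset
        · exact ((hTsub E hE).trans hbbx).trans hxP.subset
      · intro E hE F hF hmeet
        rcases Finset.mem_insert.mp hE with rfl | hE2
        · rcases Finset.mem_insert.mp hF with rfl | hF2
          · exact Or.inl subset_rfl
          · exact Or.inr ((hTsub F hF2).trans hbbx)
        · rcases Finset.mem_insert.mp hF with rfl | hF2
          · exact Or.inl ((hTsub E hE2).trans hbbx)
          · exact hccpair E hE2 F hF2 hmeet
      · intro X hX hpwd hS
        by_cases hxX : x ∈ X
        · have heq : X.sup id = x := by
            apply le_antisymm
            · apply Finset.sup_le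
              intro E hE
              rcases Finset.mem_insert.mp (hX hE) with rfl | hE2
              · exact subset_rfl
              · exact (hTsub E hE2).trans hbbx
            · exact Finset.le_sup (f := id) hxX
          rw [heq]; exact hxX
        · refine hccdisj X ?_ hS
          intro E hE
          rcases Finset.mem_insert.mp (hX hE) with rfl | hE2
          · exact absurd hE hxX
          · exact hE2
    have H1gen : ∀ N₁ : Finset (Finset V), IsNested B N₁ → C₀ ⊆ N₁ →
        b ∈ N₁ → b' ∈ N₁ → False := by
      intro N₁ hN₁ hCN₁ hbN hb'N
      have hXsub : ({b, b'} : Finset (Finset V)) ⊆ N₁ := by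
        intro x hx
        rcases Finset.mem_insert.mp hx with rfl | hx
        · exact hbN
        · rw [Finset.mem_singleton] at hx
          rw [hx]; exact hb'N
      have hsup : ({b, b'} : Finset (Finset V)).sup id = P := by rw [sup_pair, hc]
      have hmem := hN₁.2.2 _ hXsub (by rw [hsup]; exact hP)
      rw [hsup] at hmem
      rcases Finset.mem_insert.mp hmem with h | h
      · exact hbP.ne h.symm
      · rw [Finset.mem_singleton] at h
        exact hb'P.ne h.symm
    have H3both : ∀ x y : Finset V, x ∈ B → x ⊂ P → ¬ x ⊆ y → x ∩ y = b ∩ b' →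
        ∀ N₁ : Finset (Finset V), IsNested B N₁ → C₀ ⊆ N₁ → x ∈ N₁ →
        ∀ W ⊆ N₁, (∀ E ∈ W, E ⊆ x ∧ E ≠ x) → x \ y ⊆ W.sup id → False := by
      intro x y hxB hxP hxy hixy N₁ hN₁ hCN₁ hxN W hWN hWprop hWcov
      set Z := W ∪ (ccSet B (b ∩ b')).filter (fun E => ¬ E ⊆ W.sup id) with hZdef
      have hZN₁ : Z ⊆ N₁ :=
        Finset.union_subset hWN (((Finset.filter_subset _ _).trans hTC₀).trans hCN₁)
      have hWZle : W.sup id ≤ Z.sup id :=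
        Finset.sup_mono (by rw [hZdef]; exact Finset.subset_union_left)
      have hWZ : W.sup id ⊆ Z.sup id := hWZle
      have hsupZ : Z.sup id = x := by
        apply le_antisymm
        · apply Finset.sup_le
          intro E hE
          rcases Finset.mem_union.mp hE with h | h
          · exact (hWprop E h).1
          · refine ((hTsub E (Finset.filter_subset _ _ h)).trans ?_)
            rw [← hixy]; exact Finset.inter_subset_left
        · intro v hv
          by_cases hvy : v ∈ y
          · obtain ⟨E, hEcc, hvE⟩ := cc_cover hB (U := b ∩ b')
              (by rw [← hixy]; exact Finset.mem_inter.mpr ⟨hv, hvy⟩)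
            by_cases hEW : E ⊆ W.sup id
            · exact hWZ (hEW hvE)
            · exact mem_sup_id.mpr ⟨E, Finset.mem_union_right _
                (Finset.mem_filter.mpr ⟨hEcc, hEW⟩), hvE⟩
          · exact hWZ (hWcov (Finset.mem_sdiff.mpr ⟨hv, hvy⟩))
      have hxZ : x ∉ Z := by
        intro h
        rcases Finset.mem_union.mp h with h | h
        · exact (hWprop x h).2 rfl
        · refine hxy ?_
          refine ((hTsub x (Finset.filter_subset _ _ h)).trans ?_)
          rw [← hixy]; exact Finset.inter_subset_right
      have hmem := hN₁.2.2 Z hZN₁ (by rw [hsupZ]; exact hxB)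
      rw [hsupZ] at hmem
      exact hxZ hmem
    exact build_and_finish hB hP hb hb' hne hC₀B hPC₀ hbC₀ hb'C₀
      (Gboth b hb.1 hbP Finset.inter_subset_left)
      (Gboth b' hb'.1 hb'P Finset.inter_subset_right)
      H1gen
      (H3both b b' hb.1 hbP hnsub rfl)
      (H3both b' b hb'.1 hb'P hnsub' (Finset.inter_comm b' b))
  · -- CASE 2 : b ∪ b' ≠ P, hence b ∩ b' = ∅
    have hd : b ∩ b' = ∅ := by
      by_contra hd0
      have hmeet : (b ∩ b').Nonempty := Finset.nonempty_iff_ne_empty.mpr hd0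
      have hu : b ∪ b' ∈ B := bs_union hB hb.1 hb'.1 hmeet
      have hss : b ⊂ b ∪ b' := by
        refine Finset.subset_union_left.ssubset_of_ne ?_
        intro h
        exact hnsub' (by rw [h]; exact Finset.subset_union_right)
      apply hc
      by_contra hne2
      exact hb.2.2 (b ∪ b') hu hss
        ((Finset.union_subset hbP.subset hb'P.subset).ssubset_of_ne hne2)
    have hdisj2 : ∀ v : V, v ∈ b → v ∈ b' → False := by
      intro v h1 h2
      have : v ∈ b ∩ b' := Finset.mem_inter.mpr ⟨h1, h2⟩
      rw [hd] at this
      exact absurd this (Finset.notMem_empty v)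
    have hb'Pb : b' ⊆ P \ b := by
      intro v hv
      exact Finset.mem_sdiff.mpr ⟨hb'P.subset hv, fun h => hdisj2 v h hv⟩
    have hb'K : b' ∈ ccSet B (P \ b) := by
      refine cc_mem_iff.mpr ⟨hb'.1, hb'Pb, ?_⟩
      intro Cc hCc hCcU hsub2
      by_contra hne2
      refine hb'.2.2 Cc hCc (hsub2.ssubset_of_ne hne2) ?_
      refine (hCcU.trans Finset.sdiff_subset).ssubset_of_ne ?_
      intro h
      obtain ⟨v, hv⟩ := hbne
      have hvC : v ∈ Cc := by rw [h]; exact hbP.subset hv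
      exact (Finset.mem_sdiff.mp (hCcU hvC)).2 hv
    have hKB : ccSet B (P \ b) ⊆ B := Finset.filter_subset _ _
    have hTB : (ccSet B (P \ b)).erase b' ⊆ B := (Finset.erase_subset _ _).trans hKB
    have hTK : (ccSet B (P \ b)).erase b' ⊆ ccSet B (P \ b) := Finset.erase_subset _ _
    have hTU : ∀ E ∈ (ccSet B (P \ b)).erase b', E ⊆ P \ b :=
      fun E hE => (cc_mem_iff.mp (hTK hE)).2.1
    have hTb'd : ∀ E ∈ (ccSet B (P \ b)).erase b', E ∩ b' = ∅ :=
      fun E hE => cc_disj hB (hTK hE) hb'K (Finset.ne_of_mem_erase hE)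
    set C₀ := insert P (maxBlocks B) ∪ (ccSet B (P \ b)).erase b' with hC₀def
    have hTC₀ : (ccSet B (P \ b)).erase b' ⊆ C₀ := Finset.subset_union_right
    have hC₀B : C₀ ⊆ B := by
      intro E hE
      rcases Finset.mem_union.mp hE with h | h
      · rcases Finset.mem_insert.mp h with rfl | h
        · exact hP
        · exact (Finset.filter_subset _ _) h
      · exact hTB h
    have hPC₀ : P ∈ C₀ := Finset.mem_union_left _ (Finset.mem_insert_self _ _)
    have hbC₀ : b ∉ C₀ := by
      intro h
      rcases Finset.mem_union.mp h with h | h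
      · rcases Finset.mem_insert.mp h with h | h
        · exact hbP.ne h
        · exact hnotmax hbP h
      · obtain ⟨v, hv⟩ := hbne
        exact (Finset.mem_sdiff.mp ((hTU b h) hv)).2 hv
    have hb'C₀ : b' ∉ C₀ := by
      intro h
      rcases Finset.mem_union.mp h with h | h
      · rcases Finset.mem_insert.mp h with h | h
        · exact hb'P.ne h
        · exact hnotmax hb'P h
      · exact Finset.notMem_erase _ _ h
    have hccpair : ∀ E ∈ ccSet B (P \ b), ∀ F ∈ ccSet B (P \ b),
        (E ∩ F).Nonempty → E ⊆ F ∨ F ⊆ E := by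
      intro E hE F hF hmeet
      rcases eq_or_ne E F with rfl | hEF
      · exact Or.inl subset_rfl
      · exact absurd (cc_disj hB hE hF hEF) hmeet.ne_empty
    have hccdisj : ∀ X ⊆ ccSet B (P \ b), X.sup id ∈ B → X.sup id ∈ X := by
      intro X hXT hS
      obtain ⟨v, hv⟩ := hB.1 _ hS
      obtain ⟨E, hEX, hvE⟩ := mem_sup_id.mp hv
      have hcc := cc_mem_iff.mp (hXT hEX)
      have heq : E = X.sup id := hcc.2.2 _ hS
        (Finset.sup_le (fun F hF => (cc_mem_iff.mp (hXT hF)).2.1))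
        (Finset.le_sup (f := id) hEX)
      rw [← heq]; exact hEX
    -- nestedness of insert b C₀
    have Gb₀ : IsNested B (insert b C₀) := by
      rw [hC₀def, ← Finset.union_insert]
      apply base_nested hB hP
      · intro E hE
        rcases Finset.mem_insert.mp hE with rfl | hE
        · exact hb.1
        · exact hTB hE
      · intro E hE
        rcases Finset.mem_insert.mp hE with rfl | hE
        · exact hbP.subset
        · exact (hTU E hE).trans Finset.sdiff_subset
      · intro E hE F hF hmeet
        rcases Finset.mem_insert.mp hE with rfl | hE2
        · rcases Finset.mem_insert.mp hF with rfl | hF2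
          · exact Or.inl subset_rfl
          · exfalso
            obtain ⟨v, hv⟩ := hmeet
            exact (Finset.mem_sdiff.mp ((hTU F hF2) (Finset.mem_inter.mp hv).2)).2
              (Finset.mem_inter.mp hv).1
        · rcases Finset.mem_insert.mp hF with rfl | hF2
          · exfalso
            obtain ⟨v, hv⟩ := hmeet
            exact (Finset.mem_sdiff.mp ((hTU E hE2) (Finset.mem_inter.mp hv).1)).2
              (Finset.mem_inter.mp hv).2
          · exact hccpair E (hTK hE2) F (hTK hF2) hmeet
      · intro X hX hpwd hS
        by_cases hbX : b ∈ X
        · by_cases hall : ∀ E ∈ X, E = b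
          · have heq : X.sup id = b := by
              apply le_antisymm
              · apply Finset.sup_le
                intro E hE
                rw [hall E hE]
                exact le_rfl
              · exact Finset.le_sup (f := id) hbX
            rw [heq]; exact hbX
          · exfalso
            push_neg at hall
            obtain ⟨E, hEX, hEneb⟩ := hall
            have hET : E ∈ (ccSet B (P \ b)).erase b' := by
              rcases Finset.mem_insert.mp (hX hEX) with rfl | h
              · exact absurd rfl hEneb
              · exact h
            have hbS : b ⊆ X.sup id := Finset.le_sup (f := id) hbX
            have hSPle : X.sup id ≤ P := by
              apply Finset.sup_le
              intro F hF
              rcases Finset.mem_insert.mp (hX hF) with rfl | h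
              · exact hbP.subset
              · exact (hTU F h).trans Finset.sdiff_subset
            have hSP : X.sup id ⊆ P := hSPle
            have hbSne : b ≠ X.sup id := by
              intro h
              obtain ⟨v, hv⟩ := hB.1 E (hTB hET)
              have hvS : v ∈ X.sup id := (Finset.le_sup (f := id) hEX) hv
              rw [← h] at hvS
              exact (Finset.mem_sdiff.mp ((hTU E hET) hv)).2 hvS
            have hSeqP : X.sup id = P := by
              by_contra hne2
              exact hb.2.2 _ hS (hbS.ssubset_of_ne hbSne) (hSP.ssubset_of_ne hne2)
            obtain ⟨u, hu⟩ := hb'ne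
            have huS : u ∈ X.sup id := by rw [hSeqP]; exact hb'P.subset hu
            obtain ⟨F, hFX, huF⟩ := mem_sup_id.mp huS
            rcases Finset.mem_insert.mp (hX hFX) with rfl | hFT
            · exact hdisj2 u huF hu
            · have : u ∈ F ∩ b' := Finset.mem_inter.mpr ⟨huF, hu⟩
              rw [hTb'd F hFT] at this
              exact absurd this (Finset.notMem_empty u)
        · refine hccdisj X ?_ hS
          intro E hE
          rcases Finset.mem_insert.mp (hX hE) with rfl | hE2
          · exact absurd hE hbX
          · exact hTK hE2
    have Gb'₀ : IsNested B (insert b' C₀) := by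
      rw [hC₀def, ← Finset.union_insert]
      have hIK : insert b' ((ccSet B (P \ b)).erase b') = ccSet B (P \ b) :=
        Finset.insert_erase hb'K
      apply base_nested hB hP
      · intro E hE
        rw [hIK] at hE
        exact hKB hE
      · intro E hE
        rw [hIK] at hE
        exact ((cc_mem_iff.mp hE).2.1).trans Finset.sdiff_subset
      · intro E hE F hF hmeet
        rw [hIK] at hE hF
        exact hccpair E hE F hF hmeet
      · intro X hX hpwd hS
        rw [hIK] at hX
        exact hccdisj X hX hS
    have H1gen : ∀ N₁ : Finset (Finset V), IsNested B N₁ → C₀ ⊆ N₁ →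
        b ∈ N₁ → b' ∈ N₁ → False := by
      intro N₁ hN₁ hCN₁ hbN hb'N
      set X := insert b (insert b' ((ccSet B (P \ b)).erase b')) with hXdef
      have hXN : X ⊆ N₁ := by
        rw [hXdef]
        refine Finset.insert_subset_iff.mpr ⟨hbN, ?_⟩
        exact Finset.insert_subset_iff.mpr ⟨hb'N, hTC₀.trans hCN₁⟩
      have hsupX : X.sup id = P := by
        apply le_antisymm
        · apply Finset.sup_le
          intro E hE
          rw [hXdef] at hE
          rcases Finset.mem_insert.mp hE with rfl | hE
          · exact hbP.subset
          rcases Finset.mem_insert.mp hE with rfl | hE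
          · exact hb'P.subset
          · exact (hTU E hE).trans Finset.sdiff_subset
        · intro v hv
          by_cases h1 : v ∈ b
          · exact mem_sup_id.mpr ⟨b, (by rw [hXdef]; exact Finset.mem_insert_self _ _), h1⟩
          by_cases h2 : v ∈ b'
          · have hb'X : b' ∈ X := by
              rw [hXdef]; exact Finset.mem_insert_of_mem (Finset.mem_insert_self _ _)
            exact mem_sup_id.mpr ⟨b', hb'X, h2⟩
          · have hvPb : v ∈ P \ b := Finset.mem_sdiff.mpr ⟨hv, h1⟩
            obtain ⟨E, hEK, hvE⟩ := cc_cover hB hvPb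
            have hEneb' : E ≠ b' := fun h => h2 (h ▸ hvE)
            have hEX : E ∈ X := by
              rw [hXdef]
              exact Finset.mem_insert_of_mem
                (Finset.mem_insert_of_mem (Finset.mem_erase.mpr ⟨hEneb', hEK⟩))
            exact mem_sup_id.mpr ⟨E, hEX, hvE⟩
      have hPX : P ∉ X := by
        rw [hXdef]
        intro h
        rcases Finset.mem_insert.mp h with h | h
        · exact hbP.ne h.symm
        rcases Finset.mem_insert.mp h with h | h
        · exact hb'P.ne h.symm
        · obtain ⟨v, hv⟩ := hbne
          exact (Finset.mem_sdiff.mp ((hTU P h) (hbP.subset hv))).2 hv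
      have hmem := hN₁.2.2 X hXN (by rw [hsupX]; exact hP)
      rw [hsupX] at hmem
      exact hPX hmem
    have H3gen : ∀ N₁ : Finset (Finset V), IsNested B N₁ → C₀ ⊆ N₁ → b ∈ N₁ →
        ∀ W ⊆ N₁, (∀ E ∈ W, E ⊆ b ∧ E ≠ b) → b \ b' ⊆ W.sup id → False := by
      intro N₁ hN₁ hCN₁ hbN W hWN hWprop hWcov
      have hbdiff : b \ b' = b := by
        rw [Finset.sdiff_eq_self_iff_disjoint]
        exact Finset.disjoint_iff_inter_eq_empty.mpr hd
      have hsupW : W.sup id = b := by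
        apply le_antisymm (Finset.sup_le fun E hE => (hWprop E hE).1)
        rw [← hbdiff]; exact hWcov
      have hmem := hN₁.2.2 W hWN (by rw [hsupW]; exact hb.1)
      rw [hsupW] at hmem
      exact (hWprop b hmem).2 rfl
    have H3gen' : ∀ N₁ : Finset (Finset V), IsNested B N₁ → C₀ ⊆ N₁ → b' ∈ N₁ →
        ∀ W ⊆ N₁, (∀ E ∈ W, E ⊆ b' ∧ E ≠ b') → b' \ b ⊆ W.sup id → False := by
      intro N₁ hN₁ hCN₁ hb'N W hWN hWprop hWcov
      have hbdiff : b' \ b = b' := by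
        rw [Finset.sdiff_eq_self_iff_disjoint]
        rw [Finset.disjoint_iff_inter_eq_empty, Finset.inter_comm]
        exact hd
      have hsupW : W.sup id = b' := by
        apply le_antisymm (Finset.sup_le fun E hE => (hWprop E hE).1)
        rw [← hbdiff]; exact hWcov
      have hmem := hN₁.2.2 W hWN (by rw [hsupW]; exact hb'.1)
      rw [hsupW] at hmem
      exact (hWprop b' hmem).2 rfl
    exact build_and_finish hB hP hb hb' hne hC₀B hPC₀ hbC₀ hb'C₀ Gb₀ Gb'₀
      H1gen H3gen H3gen'
end

section
/- Let B be a building set on a finite ground set V, and let N, N' be two adjacent maximal B-nested sets with N \ {B₀} = N' \ {B₀'} and parent P. Then every connected component of B₀ ∩ B₀' and every connected component of P \ (B₀ ∪ B₀') belongs to N ∩ N'. -/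
open scoped Classical

variable {V : Type*} [Fintype V] [DecidableEq V]

/-!
A block `K ∈ B` can be added to a nested set `N` unless `K ∪ ⋃ X ∈ B` for some nonempty
family `X ⊆ N` of members incomparable with `K`; for a maximal `N` this puts every such `K`
in `N`. For a component `K` of `b ∩ b'`, nestedness of `N` and of `N'` traps such a union
inside `b` and inside `b'`, so it cannot exceed `K`.

For a component `K` of `P \ (b ∪ b')` one uses that in a maximal nested set every root
`C \ ⋃ {D ∈ N | D ⊊ C}` is a single point. If `K ∉ N`, some point of `K` is covered by no
member of `N` inside `K`, and it is then a root point of `P` in `N'`. But the root point of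
`b` in `N` is also a root point of `P` in `N'`: it cannot lie in `b'`, since the component of
`b ∩ b'` through it would be a member of `N` strictly inside `b`. The two points coincide,
although one lies in `b` and the other does not.

Exchanging the roles of `(N, b)` and `(N', b')` gives membership in `N'`.
-/

open Finset

section

omit [Fintype V]

variable {B N : Finset (Finset V)} {A C D K b P : Finset V} {x : V}

theorem mem_root : x ∈ root N C ↔ x ∈ C ∧ ∀ D ∈ N, D ⊂ C → x ∉ D := by
  simp [root, mem_sup]

theorem IsNested.sup_ne {S : Finset (Finset V)} (hN : IsNested B N) (hS : S ⊆ N) (hK : K ∈ B)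
    (hKS : K ∉ S) : S.sup id ≠ K :=
  fun h => hKS (h ▸ hN.2.2 S hS (h ▸ hK))

theorem IsNested.root_nonempty (hN : IsNested B N) (hC : C ∈ N) : (root N C).Nonempty := by
  rw [root, sdiff_nonempty]
  intro hsub
  refine hN.sup_ne (filter_subset (· ⊂ C) N) (hN.1 hC)
    (fun h => ssubset_irrefl C (mem_filter.1 h).2) ?_
  exact subset_antisymm (Finset.sup_le fun D hD => subset_of_ssubset (mem_filter.1 hD).2) hsub

theorem IsNested.exists_mem_forall_notMem (hN : IsNested B N) (hK : K ∈ B) (hKN : K ∉ N) :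
    ∃ x ∈ K, ∀ D ∈ N, D ⊆ K → x ∉ D := by
  have hsub : ¬ K ⊆ (N.filter (· ⊆ K)).sup id := fun hsub =>
    hN.sup_ne (filter_subset (· ⊆ K) N) hK (fun h => hKN (mem_filter.1 h).1)
      (subset_antisymm (Finset.sup_le fun D hD => (mem_filter.1 hD).2) hsub)
  obtain ⟨x, hxK, hx⟩ := not_subset.1 hsub
  exact ⟨x, hxK, fun D hD hDK hxD => hx (mem_sup.2 ⟨D, mem_filter.2 ⟨hD, hDK⟩, hxD⟩)⟩

theorem IsNested.subset_or_subset_s8 (hB : IsBuildingSet B) (hN : IsNested B N) (hA : A ∈ N)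
    (hC : C ∈ N) (h : (A ∩ C).Nonempty) : A ⊆ C ∨ C ⊆ A := by
  have hmem := hN.2.2 {A, C} (insert_subset hA (singleton_subset_iff.2 hC))
    (by simpa using hB.2.1 A (hN.1 hA) C (hN.1 hC) h)
  simp only [sup_insert, sup_singleton, id, mem_insert, mem_singleton] at hmem
  rcases hmem with h | h
  · exact Or.inr (h ▸ le_sup_right)
  · exact Or.inl (h ▸ le_sup_left)

theorem IsNested.sup_subset_of_union_mem (hB : IsBuildingSet B) (hN : IsNested B N)
    {X : Finset (Finset V)} (hX : X ⊆ N) (hA : A ∈ N) (hKA : K ⊆ A) (hK : K.Nonempty)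
    (hU : K ∪ X.sup id ∈ B) (hXK : ∀ D ∈ X, ¬ K ⊆ D) : X.sup id ⊆ A := by
  have hsup : (insert A X).sup id = K ∪ X.sup id ∪ A := by
    rw [sup_insert, union_right_comm, union_eq_right.2 hKA]; rfl
  obtain ⟨y, hy⟩ := hK
  have hmem := hN.2.2 (insert A X) (insert_subset hA hX) (hsup ▸
    hB.2.1 _ hU A (hN.1 hA) ⟨y, mem_inter.2 ⟨mem_union_left _ hy, hKA hy⟩⟩)
  rw [hsup] at hmem
  rcases mem_insert.1 hmem with h | h
  · exact h ▸ subset_union_right.trans subset_union_left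
  · exact absurd (subset_union_left.trans subset_union_left) (hXK _ h)

theorem IsNested.union_sup_notMem (hB : IsBuildingSet B) (hN : IsNested B N)
    {X : Finset (Finset V)} (hX : X ⊆ N) (hXne : X.Nonempty) (hK : K ∈ N)
    (hXK : ∀ D ∈ X, ¬ D ⊆ K) (hKX : ∀ D ∈ X, ¬ K ⊆ D) : K ∪ X.sup id ∉ B :=
  fun hU =>
  have ⟨D, hD⟩ := hXne
  hXK D hD <| (le_sup (f := id) hD).trans <|
    hN.sup_subset_of_union_mem hB hX hK subset_rfl (hB.1 K (hN.1 hK)) hU hKX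

theorem sup_eq_union_sup_filter {X : Finset (Finset V)} (hK : K ∈ X) :
    X.sup id = K ∪ (X.filter (¬ · ⊆ K)).sup id := by
  refine subset_antisymm (Finset.sup_le fun D hD => ?_)
    (union_subset (le_sup (f := id) hK) (sup_mono (filter_subset _ X)))
  by_cases hDK : D ⊆ K
  · exact hDK.trans subset_union_left
  · exact (le_sup (f := id) (mem_filter.2 ⟨hD, hDK⟩)).trans subset_union_right

theorem IsNested.insert (hN : IsNested B N) (hK : K ∈ B)
    (H : ∀ X ⊆ N, X.Nonempty → (∀ D ∈ X, ¬ D ⊆ K) → (∀ D ∈ X, ¬ K ⊆ D) →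
      K ∪ X.sup id ∉ B) :
    IsNested B (insert K N) := by
  refine ⟨insert_subset hK hN.1, fun C hC hmax => mem_insert_of_mem (hN.2.1 C hC hmax),
    fun X hX hU => ?_⟩
  have hmemN : ∀ D ∈ X, D ≠ K → D ∈ N := fun D hD hDK =>
    (mem_insert.1 (hX hD)).resolve_left hDK
  by_cases hKX : K ∈ X
  swap
  · exact hN.2.2 X (fun D hD => hmemN D hD fun h => hKX (h ▸ hD)) hU
  rw [sup_eq_union_sup_filter hKX] at hU ⊢
  set Y := X.filter (¬ · ⊆ K)
  have hY : Y ⊆ N := fun D hD =>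
    hmemN D (mem_filter.1 hD).1 fun h => (mem_filter.1 hD).2 h.subset
  rcases Y.eq_empty_or_nonempty with hYe | hYne
  · simpa [hYe] using hKX
  by_cases hbig : ∃ D ∈ Y, K ⊆ D
  · obtain ⟨D, hD, hKD⟩ := hbig
    rw [union_eq_right.2 (hKD.trans (le_sup (f := id) hD))] at hU ⊢
    exact filter_subset _ X (hN.2.2 Y hY hU)
  · simp only [not_exists, not_and] at hbig
    exact absurd hU (H Y hY hYne (fun D hD => (mem_filter.1 hD).2) hbig)

theorem IsMaxNested.mem_of_union_sup_notMem (hN : IsMaxNested B N) (hK : K ∈ B)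
    (H : ∀ X ⊆ N, X.Nonempty → (∀ D ∈ X, ¬ D ⊆ K) → (∀ D ∈ X, ¬ K ⊆ D) →
      K ∪ X.sup id ∉ B) :
    K ∈ N :=
  (hN.2 _ (hN.1.insert hK H) (subset_insert K N)).symm ▸ mem_insert_self K N

theorem IsNested.exists_isParent (hB : IsBuildingSet B) (hN : IsNested B N) (hK : K ∈ N)
    (hC : C ∈ N) (hKC : K ⊂ C) : ∃ P, IsParent N K P := by
  obtain ⟨P, hP, hmin⟩ :=
    (N.filter (K ⊂ ·)).exists_minimal ⟨C, mem_filter.2 ⟨hC, hKC⟩⟩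
  rw [mem_filter] at hP
  refine ⟨P, hP.1, hP.2, fun D hD hKD => ?_⟩
  obtain ⟨x, hx⟩ := hB.1 K (hN.1 hK)
  rcases hN.subset_or_subset_s8 hB hD hP.1
      ⟨x, mem_inter.2 ⟨subset_of_ssubset hKD hx, subset_of_ssubset hP.2 hx⟩⟩ with hDP | hPD
  · exact hmin (mem_filter.2 ⟨hD, hKD⟩) hDP
  · exact hPD

theorem IsNested.disjoint_of_ssubset_of_isParent (hB : IsBuildingSet B) (hN : IsNested B N)
    (hb : b ∈ N) (hP : IsParent N b P) (hD : D ∈ N) (hDP : D ⊂ P)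
    (hxD : x ∈ D) (hxb : x ∉ b) : Disjoint D b := by
  by_contra hDb
  rcases hN.subset_or_subset_s8 hB hD hb (not_disjoint_iff_nonempty_inter.1 hDb) with hDb | hbD
  · exact hxb (hDb hxD)
  · exact not_subset_of_ssubset hDP
      (hP.2.2 D hD (ssubset_of_subset_of_ne hbD fun h => hxb (h ▸ hxD)))

structure IsExchange (B N N' : Finset (Finset V)) (b b' : Finset V) : Prop where
  left : IsMaxNested B N
  right : IsMaxNested B N'
  mem_left : b ∈ N
  mem_right : b' ∈ N'
  ne : b ≠ b'
  erase_eq : N.erase b = N'.erase b'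

namespace IsExchange

variable {N' : Finset (Finset V)} {b' : Finset V}

theorem symm (h : IsExchange B N N' b b') : IsExchange B N' N b' b :=
  ⟨h.right, h.left, h.mem_right, h.mem_left, h.ne.symm, h.erase_eq.symm⟩

theorem mem_of_mem_of_ne (h : IsExchange B N N' b b') (hD : D ∈ N) (hDb : D ≠ b) :
    D ∈ N' := by
  have hD' : D ∈ N.erase b := mem_erase.2 ⟨hDb, hD⟩
  rw [h.erase_eq] at hD'
  exact mem_of_mem_erase hD'

theorem notMem_left (h : IsExchange B N N' b b') : b' ∉ N := fun hb' =>
  notMem_erase b' N' (h.erase_eq ▸ mem_erase.2 ⟨h.ne.symm, hb'⟩)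

theorem not_subset (hB : IsBuildingSet B) (h : IsExchange B N N' b b') : ¬ b ⊆ b' := by
  intro hbb'
  refine h.notMem_left (h.left.mem_of_union_sup_notMem (h.right.1.1 h.mem_right)
    fun X hX hXne hXb' hb'X => ?_)
  have hXN' : X ⊆ N' := fun D hD =>
    h.mem_of_mem_of_ne (hX hD) fun hDb => hXb' D hD (hDb ▸ hbb')
  exact h.right.1.union_sup_notMem hB hXN' hXne h.mem_right hXb' hb'X

theorem subset_of_isParent (hB : IsBuildingSet B) (h : IsExchange B N N' b b')
    (hP : IsParent N b P) : b' ⊆ P := by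
  by_contra hb'P
  refine h.symm.notMem_left (h.right.mem_of_union_sup_notMem (h.left.1.1 h.mem_left)
    fun X hX hXne hXb hbX hU => ?_)
  by_cases hb'X : b' ∈ X
  · have hPN' : P ∈ N' := h.mem_of_mem_of_ne hP.1 (ne_of_ssubset hP.2.1).symm
    exact hb'P <| (le_sup (f := id) hb'X).trans <| h.right.1.sup_subset_of_union_mem hB hX hPN'
      (subset_of_ssubset hP.2.1) (hB.1 b (h.left.1.1 h.mem_left)) hU hbX
  · have hXN : X ⊆ N := fun D hD =>
      h.symm.mem_of_mem_of_ne (hX hD) (ne_of_mem_of_not_mem hD hb'X)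
    exact h.left.1.union_sup_notMem hB hXN hXne h.mem_left hXb hbX hU

theorem ssubset_of_isParent (hB : IsBuildingSet B) (h : IsExchange B N N' b b')
    (hP : IsParent N b P) : b' ⊂ P :=
  ssubset_of_subset_of_ne (h.subset_of_isParent hB hP)
    fun hb'P => h.not_subset hB (hb'P ▸ subset_of_ssubset hP.2.1)

theorem isParent (hB : IsBuildingSet B) (h : IsExchange B N N' b b') (hP : IsParent N b P) :
    IsParent N' b' P := by
  have hPN' : P ∈ N' := h.mem_of_mem_of_ne hP.1 (ne_of_ssubset hP.2.1).symm
  have hb'P := h.ssubset_of_isParent hB hP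
  obtain ⟨P', hP'⟩ := h.right.1.exists_isParent hB h.mem_right hPN' hb'P
  have hP'N : P' ∈ N := h.symm.mem_of_mem_of_ne hP'.1 (ne_of_ssubset hP'.2.1).symm
  have hPP' : P ⊆ P' := hP.2.2 P' hP'N (h.symm.ssubset_of_isParent hB hP')
  exact ⟨hPN', hb'P, fun C hC hb'C => hPP'.trans (hP'.2.2 C hC hb'C)⟩

theorem subset_sdiff_of_ssubset (hB : IsBuildingSet B) (h : IsExchange B N N' b b')
    (hP : IsParent N b P) (hD : D ∈ N) (hDP : D ⊂ P) (hxD : x ∈ D) (hx : x ∉ b ∪ b') :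
    D ⊆ P \ (b ∪ b') := by
  rw [mem_union, not_or] at hx
  have hDN' : D ∈ N' := h.mem_of_mem_of_ne hD fun hDb => hx.1 (hDb ▸ hxD)
  refine subset_sdiff.2 ⟨subset_of_ssubset hDP, disjoint_union_right.2 ⟨?_, ?_⟩⟩
  · exact h.left.1.disjoint_of_ssubset_of_isParent hB h.mem_left hP hD hDP hxD hx.1
  · exact h.right.1.disjoint_of_ssubset_of_isParent hB h.mem_right (h.isParent hB hP) hDN' hDP
      hxD hx.2

end IsExchange

end

section

variable {B N N' : Finset (Finset V)} {b b' P C K U : Finset V} {x : V}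

theorem mem_ccSet :
    K ∈ ccSet B U ↔ K ∈ B ∧ K ⊆ U ∧ ∀ C ∈ B, C ⊆ U → K ⊆ C → K = C :=
  mem_filter

theorem subset_of_mem_ccSet (hK : K ∈ ccSet B U) (hC : C ∈ B) (hCU : C ⊆ U) (hKC : K ⊆ C) :
    C ⊆ K :=
  ((mem_ccSet.1 hK).2.2 C hC hCU hKC).ge

theorem IsBuildingSet.exists_mem_ccSet (hB : IsBuildingSet B) (hx : x ∈ U) :
    ∃ K ∈ ccSet B U, x ∈ K := by
  obtain ⟨K, hK, hmax⟩ := (B.filter fun C => x ∈ C ∧ C ⊆ U).exists_maximal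
    ⟨{x}, mem_filter.2 ⟨hB.2.2 x, mem_singleton_self x, singleton_subset_iff.2 hx⟩⟩
  obtain ⟨hKB, hxK, hKU⟩ := mem_filter.1 hK
  refine ⟨K, mem_ccSet.2 ⟨hKB, hKU, fun C hC hCU hKC => ?_⟩, hxK⟩
  exact subset_antisymm hKC (hmax (mem_filter.2 ⟨hC, hKC hxK, hCU⟩) hKC)

theorem IsMaxNested.mem_of_mem_ccSet (hN : IsMaxNested B N) (hK : K ∈ ccSet B U)
    (H : ∀ X ⊆ N, (∀ D ∈ X, ¬ K ⊆ D) → K ∪ X.sup id ∈ B → X.sup id ⊆ U) :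
    K ∈ N := by
  obtain ⟨hKB, hKU, -⟩ := mem_ccSet.1 hK
  refine hN.mem_of_union_sup_notMem hKB fun X hX ⟨D, hD⟩ hXK hKX hU => hXK D hD ?_
  have hUK : K ∪ X.sup id ⊆ K :=
    subset_of_mem_ccSet hK hU (union_subset hKU (H X hX hKX hU)) subset_union_left
  exact (le_sup (f := id) hD).trans (subset_union_right.trans hUK)

-- Maximality of `N` forces the root to be a point: otherwise the component of
-- `C \ {v}` through another root point `u` could be added to `N`.
theorem IsMaxNested.eq_of_mem_root (hB : IsBuildingSet B) (hN : IsMaxNested B N) (hC : C ∈ N)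
    {u v : V} (hu : u ∈ root N C) (hv : v ∈ root N C) : u = v := by
  by_contra huv
  rw [mem_root] at hu hv
  obtain ⟨K, hK, huK⟩ := hB.exists_mem_ccSet (mem_erase.2 ⟨huv, hu.1⟩)
  obtain ⟨hKB, hKCv, -⟩ := mem_ccSet.1 hK
  have hKC : K ⊆ C := hKCv.trans (erase_subset v C)
  have hKN : K ∈ N := hN.mem_of_mem_ccSet hK fun X hX hXK hU y hy => by
    have hXC := hN.1.sup_subset_of_union_mem hB hX hC hKC (hB.1 K hKB) hU hXK
    obtain ⟨D, hD, hyD⟩ := mem_sup.1 hy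
    have hDC : D ⊂ C := ssubset_of_subset_of_ne ((le_sup (f := id) hD).trans hXC)
      fun hDC => hXK D hD (hDC ▸ hKC)
    exact mem_erase.2 ⟨fun hyv => hv.2 D (hX hD) hDC (hyv ▸ hyD), hXC hy⟩
  have hKC' : K ⊂ C := ssubset_of_subset_of_ne hKC fun hKC =>
    (mem_erase.1 (hKCv (hKC ▸ hv.1))).1 rfl
  exact hu.2 K hKN hKC' huK

namespace IsExchange

theorem mem_of_mem_ccSet_inter (hB : IsBuildingSet B) (h : IsExchange B N N' b b')
    (hK : K ∈ ccSet B (b ∩ b')) : K ∈ N := by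
  obtain ⟨hKB, hKbb', -⟩ := mem_ccSet.1 hK
  have hKb : K ⊆ b := hKbb'.trans inter_subset_left
  refine h.left.mem_of_mem_ccSet hK fun X hX hXK hU => subset_inter ?_ ?_
  · exact h.left.1.sup_subset_of_union_mem hB hX h.mem_left hKb (hB.1 K hKB) hU hXK
  · have hXN' : X ⊆ N' := fun D hD =>
      h.mem_of_mem_of_ne (hX hD) fun hDb => hXK D hD (hDb ▸ hKb)
    exact h.right.1.sup_subset_of_union_mem hB hXN' h.mem_right (hKbb'.trans inter_subset_right)
      (hB.1 K hKB) hU hXK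

theorem notMem_of_mem_root (hB : IsBuildingSet B) (h : IsExchange B N N' b b')
    (hx : x ∈ root N b) : x ∉ b' := by
  intro hxb'
  rw [mem_root] at hx
  obtain ⟨K, hK, hxK⟩ := hB.exists_mem_ccSet (mem_inter.2 ⟨hx.1, hxb'⟩)
  have hKbb' := (mem_ccSet.1 hK).2.1
  have hKb : K ⊂ b := ssubset_of_subset_of_ne (hKbb'.trans inter_subset_left)
    fun hKb => h.not_subset hB (hKb ▸ hKbb'.trans inter_subset_right)
  exact hx.2 K (h.mem_of_mem_ccSet_inter hB hK) hKb hxK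

theorem mem_root_of_mem_root (hB : IsBuildingSet B) (h : IsExchange B N N' b b')
    (hP : IsParent N b P) (hx : x ∈ root N b) : x ∈ root N' P := by
  have hxb' := h.notMem_of_mem_root hB hx
  rw [mem_root] at hx ⊢
  refine ⟨subset_of_ssubset hP.2.1 hx.1, fun D hD hDP hxD => ?_⟩
  have hDN : D ∈ N := h.symm.mem_of_mem_of_ne hD fun hDb' => hxb' (hDb' ▸ hxD)
  have hDb : D ≠ b := fun hDb => h.symm.notMem_left (hDb ▸ hD)
  rcases h.left.1.subset_or_subset_s8 hB hDN h.mem_left ⟨x, mem_inter.2 ⟨hxD, hx.1⟩⟩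
    with hDb' | hbD
  · exact hx.2 D hDN (ssubset_of_subset_of_ne hDb' hDb) hxD
  · exact not_subset_of_ssubset hDP (hP.2.2 D hDN (ssubset_of_subset_of_ne hbD hDb.symm))

theorem mem_root_of_mem_ccSet_sdiff (hB : IsBuildingSet B) (h : IsExchange B N N' b b')
    (hP : IsParent N b P) (hK : K ∈ ccSet B (P \ (b ∪ b'))) (hxK : x ∈ K)
    (hx : ∀ D ∈ N, D ⊆ K → x ∉ D) : x ∈ root N' P := by
  obtain ⟨hKB, hKsub, -⟩ := mem_ccSet.1 hK
  have hxbb' : x ∉ b ∪ b' := (mem_sdiff.1 (hKsub hxK)).2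
  refine mem_root.2 ⟨sdiff_subset (hKsub hxK), fun D hD hDP hxD => ?_⟩
  have hDN : D ∈ N := h.symm.mem_of_mem_of_ne hD fun hDb' =>
    hxbb' (mem_union_right _ (hDb' ▸ hxD))
  have hDK : D ∪ K ⊆ K := subset_of_mem_ccSet hK
    (hB.2.1 D (h.left.1.1 hDN) K hKB ⟨x, mem_inter.2 ⟨hxD, hxK⟩⟩)
    (union_subset (h.subset_sdiff_of_ssubset hB hP hDN hDP hxD hxbb') hKsub) subset_union_right
  exact hx D hDN (subset_union_left.trans hDK) hxD

theorem mem_of_mem_ccSet_sdiff (hB : IsBuildingSet B) (h : IsExchange B N N' b b')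
    (hP : IsParent N b P) (hK : K ∈ ccSet B (P \ (b ∪ b'))) : K ∈ N := by
  by_contra hKN
  obtain ⟨hKB, hKsub, -⟩ := mem_ccSet.1 hK
  obtain ⟨v, hvK, hv⟩ := h.left.1.exists_mem_forall_notMem hKB hKN
  obtain ⟨x, hx⟩ := h.left.1.root_nonempty h.mem_left
  have hxv : x = v := h.right.eq_of_mem_root hB (h.isParent hB hP).1
    (h.mem_root_of_mem_root hB hP hx) (h.mem_root_of_mem_ccSet_sdiff hB hP hK hvK hv)
  exact (mem_sdiff.1 (hKsub hvK)).2 (mem_union_left _ (hxv ▸ (mem_root.1 hx).1))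

end IsExchange

end

theorem stmt8 (B : Finset (Finset V)) (hB : IsBuildingSet B)
    (N N' : Finset (Finset V)) (hN : IsMaxNested B N) (hN' : IsMaxNested B N')
    (b b' P : Finset V) (hb : b ∈ N) (hb' : b' ∈ N') (hne : b ≠ b')
    (hadj : N.erase b = N'.erase b') (hpar : IsParent N b P) :
    (∀ K ∈ ccSet B (b ∩ b'), K ∈ N ∧ K ∈ N') ∧
    (∀ K ∈ ccSet B (P \ (b ∪ b')), K ∈ N ∧ K ∈ N') := by
  have h : IsExchange B N N' b b' := ⟨hN, hN', hb, hb', hne, hadj⟩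
  have hpar' : IsParent N' b' P := h.isParent hB hpar
  refine ⟨fun K hK => ⟨?_, ?_⟩, fun K hK => ⟨?_, ?_⟩⟩
  · exact h.mem_of_mem_ccSet_inter hB hK
  · exact h.symm.mem_of_mem_ccSet_inter hB (inter_comm b b' ▸ hK)
  · exact h.mem_of_mem_ccSet_sdiff hB hpar hK
  · exact h.symm.mem_of_mem_ccSet_sdiff hB hpar' (union_comm b b' ▸ hK)
end

section
/- Let B be a building set on a finite ground set V, let P ∈ B be an elementary block, and let B₀ ≠ B₀' be two inclusion-maximal blocks of B strictly contained in P. Then the connected components of P \ (B₀ ∪ B₀') are exactly the maximal blocks of B strictly contained in P other than B₀ and B₀', and B₀ ∩ B₀' = ∅. Consequently Σ_{M maximal in P} χ(M) = χ(P), i.e., the maximal strict subblocks of an elementary block partition it. -/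
/-!
Two distinct maximal blocks `M, M'` of `P` cannot meet: otherwise `M ∪ M'` is a block, which
is strictly between `M` and `P` unless it equals `P`, and `P = M ∪ M'` with `M ∩ M' ≠ ∅` is
excluded by elementarity. Every `v ∈ P` lies in a maximal block, the one above `{v}`. So the
maximal blocks partition `P`, which gives the sum of indicator vectors, and every block inside
`P \ (B₀ ∪ B₀')` lies in a maximal block different from `B₀, B₀'`, hence inside
`P \ (B₀ ∪ B₀')` as well.
-/

open scoped Classical

variable {V : Type*} [Fintype V] [DecidableEq V]

omit [Fintype V] in
lemma chi_eq_indicator (S : Finset V) : chi S = Set.indicator (S : Set V) 1 := by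
  ext v
  simp [chi, Set.indicator_apply]

omit [Fintype V] in
lemma sum_chi_eq_chi_of_pairwiseDisjoint {S : Finset (Finset V)} {P : Finset V}
    (hS : (S : Set (Finset V)).PairwiseDisjoint id) (hsub : ∀ M ∈ S, M ⊆ P)
    (hcover : ∀ v ∈ P, ∃ M ∈ S, v ∈ M) :
    ∑ M ∈ S, chi M = chi P := by
  have hunion : ⋃ M ∈ S, (M : Set V) = P := by
    ext v
    simp only [Set.mem_iUnion, Finset.mem_coe, exists_prop]
    exact ⟨fun ⟨M, hM, hv⟩ => hsub M hM hv, hcover v⟩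
  ext v
  rw [Finset.sum_apply, chi_eq_indicator, ← hunion,
    Finset.indicator_biUnion_apply S (fun M => (M : Set V))
      fun _ hM _ hM' hne => Finset.disjoint_coe.2 (hS hM hM' hne)]
  simp only [chi_eq_indicator]

section MaximalBlocks

variable {B : Finset (Finset V)} {P : Finset V}

omit [Fintype V] [DecidableEq V] in
lemma exists_maxIn_superset {C : Finset V} (hC : C ∈ B) (hCP : C ⊂ P) :
    ∃ M, MaxIn B P M ∧ C ⊆ M := by
  obtain ⟨M, hM, hMmax⟩ := Finset.exists_maximal
    (s := B.filter fun D => C ⊆ D ∧ D ⊂ P) ⟨C, by simp [hC, hCP]⟩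
  simp only [Finset.mem_filter] at hM
  refine ⟨M, ⟨hM.1, hM.2.2, fun D hD hMD hDP => ?_⟩, hM.2.1⟩
  exact hMD.2 (hMmax (Finset.mem_filter.2 ⟨hD, hM.2.1.trans hMD.subset, hDP⟩) hMD.subset)

omit [Fintype V] in
lemma MaxIn.disjoint (hB : IsBuildingSet B) (hel : Elementary B P) {M M' : Finset V}
    (hM : MaxIn B P M) (hM' : MaxIn B P M') (hne : M ≠ M') : Disjoint M M' := by
  rw [Finset.disjoint_iff_inter_eq_empty]
  by_contra hMM'
  have hU : M ∪ M' ∈ B :=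
    hB.2.1 M hM.1 M' hM'.1 (Finset.nonempty_iff_ne_empty.2 hMM')
  by_cases hUP : M ∪ M' = P
  · exact hMM' (hel M hM.1 M' hM'.1 hM.2.1.ne hM'.2.1.ne hUP.symm)
  · have hMU : M ⊂ M ∪ M' := by
      refine Finset.ssubset_iff_subset_ne.2 ⟨Finset.subset_union_left, fun hEq => ?_⟩
      have hM'M : M' ⊂ M := Finset.ssubset_iff_subset_ne.2
        ⟨hEq ▸ Finset.subset_union_right, hne.symm⟩
      exact hM'.2.2 M hM.1 hM'M hM.2.1
    exact hM.2.2 _ hU hMU <| Finset.ssubset_iff_subset_ne.2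
      ⟨Finset.union_subset hM.2.1.subset hM'.2.1.subset, hUP⟩

omit [Fintype V] in
lemma pairwiseDisjoint_maxIn (hB : IsBuildingSet B) (hel : Elementary B P) :
    (↑(B.filter fun M => MaxIn B P M) : Set (Finset V)).PairwiseDisjoint id :=
  fun _ hM _ hM' hne => (Finset.mem_filter.1 hM).2.disjoint hB hel (Finset.mem_filter.1 hM').2 hne

omit [Fintype V] in
lemma MaxIn.exists_maxIn_mem (hB : IsBuildingSet B) {b : Finset V} (hb : MaxIn B P b)
    {v : V} (hv : v ∈ P) : ∃ M, MaxIn B P M ∧ v ∈ M := by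
  have hvP : ({v} : Finset V) ⊂ P := by
    refine Finset.ssubset_iff_subset_ne.2 ⟨Finset.singleton_subset_iff.2 hv, fun hEq => ?_⟩
    have hb_empty : b = ∅ := Finset.ssubset_singleton_iff.1 (hEq ▸ hb.2.1)
    exact (hB.1 b hb.1).ne_empty hb_empty
  obtain ⟨M, hM, hvM⟩ := exists_maxIn_superset (hB.2.2 v) hvP
  exact ⟨M, hM, Finset.singleton_subset_iff.1 hvM⟩

lemma ccSet_eq_filter_maxIn (hB : IsBuildingSet B) {U : Finset V} (hUP : U ⊂ P)
    (hsplit : ∀ M, MaxIn B P M → M ⊆ U ∨ Disjoint M U) :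
    ccSet B U = (B.filter fun M => MaxIn B P M).filter (· ⊆ U) := by
  ext K
  simp only [ccSet, Finset.mem_filter]
  constructor
  · rintro ⟨hKB, hKU, hKmax⟩
    obtain ⟨M, hM, hKM⟩ := exists_maxIn_superset hKB (hKU.trans_ssubset hUP)
    obtain ⟨y, hy⟩ := hB.1 K hKB
    have hMU : M ⊆ U := (hsplit M hM).resolve_right fun hMU =>
      Finset.disjoint_left.1 hMU (hKM hy) (hKU hy)
    obtain rfl := hKmax M hM.1 hMU hKM
    exact ⟨⟨hKB, hM⟩, hMU⟩
  · rintro ⟨⟨hKB, hK⟩, hKU⟩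
    refine ⟨hKB, hKU, fun C hC hCU hKC => by_contra fun hne => ?_⟩
    exact hK.2.2 C hC (Finset.ssubset_iff_subset_ne.2 ⟨hKC, hne⟩) (hCU.trans_ssubset hUP)

omit [Fintype V] in
lemma MaxIn.subset_sdiff_union_iff {M b b' : Finset V}
    (hB : IsBuildingSet B) (hel : Elementary B P)
    (hM : MaxIn B P M) (hb : MaxIn B P b) (hb' : MaxIn B P b') :
    M ⊆ P \ (b ∪ b') ↔ M ≠ b ∧ M ≠ b' := by
  rw [Finset.subset_sdiff, Finset.disjoint_union_right]
  constructor
  · rintro ⟨-, hMb, hMb'⟩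
    have hM_ne_empty := (hB.1 M hM.1).ne_empty
    exact ⟨fun h => hM_ne_empty (Finset.disjoint_self_iff_empty _ |>.1 (h ▸ hMb)),
      fun h => hM_ne_empty (Finset.disjoint_self_iff_empty _ |>.1 (h ▸ hMb'))⟩
  · rintro ⟨hMb, hMb'⟩
    exact ⟨hM.2.1.subset, hM.disjoint hB hel hb hMb, hM.disjoint hB hel hb' hMb'⟩

end MaximalBlocks

theorem stmt10_general (B : Finset (Finset V)) (hB : IsBuildingSet B)
    (P : Finset V) (hel : Elementary B P)
    (b b' : Finset V) (hb : MaxIn B P b) (hb' : MaxIn B P b') (hne : b ≠ b') :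
    ccSet B (P \ (b ∪ b')) = (B.filter (fun M => MaxIn B P M)) \ {b, b'} ∧
    b ∩ b' = ∅ ∧
    ∑ M ∈ B.filter (fun M => MaxIn B P M), chi M = chi P := by
  have hsub (M) (hM : MaxIn B P M) := hM.subset_sdiff_union_iff hB hel hb hb'
  have hUP : P \ (b ∪ b') ⊂ P :=
    Finset.sdiff_ssubset (Finset.union_subset hb.2.1.subset hb'.2.1.subset)
      ((hB.1 b hb.1).mono Finset.subset_union_left)
  have hsplit (M) (hM : MaxIn B P M) : M ⊆ P \ (b ∪ b') ∨ Disjoint M (P \ (b ∪ b')) := by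
    by_cases hMbb' : M = b ∨ M = b'
    · right
      exact Finset.disjoint_sdiff.mono_left (by rcases hMbb' with rfl | rfl <;> simp)
    · exact Or.inl ((hsub M hM).2 (not_or.1 hMbb'))
  refine ⟨?_, Finset.disjoint_iff_inter_eq_empty.1 (hb.disjoint hB hel hb' hne), ?_⟩
  · rw [ccSet_eq_filter_maxIn hB hUP hsplit]
    ext M
    simp +contextual only [Finset.mem_filter, Finset.mem_sdiff, Finset.mem_insert,
      Finset.mem_singleton, not_or, hsub, and_congr_right_iff, implies_true]
  · refine sum_chi_eq_chi_of_pairwiseDisjoint (pairwiseDisjoint_maxIn hB hel)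
      (fun M hM => (Finset.mem_filter.1 hM).2.2.1.subset) fun v hv => ?_
    obtain ⟨M, hM, hvM⟩ := hb.exists_maxIn_mem hB hv
    exact ⟨M, Finset.mem_filter.2 ⟨hM.1, hM⟩, hvM⟩

theorem stmt10 (B : Finset (Finset V)) (hB : IsBuildingSet B)
    (P : Finset V) (hP : P ∈ B) (hel : Elementary B P)
    (b b' : Finset V) (hb : MaxIn B P b) (hb' : MaxIn B P b') (hne : b ≠ b') :
    ccSet B (P \ (b ∪ b')) = (B.filter (fun M => MaxIn B P M)) \ {b, b'} ∧
    b ∩ b' = ∅ ∧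
    ∑ M ∈ B.filter (fun M => MaxIn B P M), chi M = chi P :=
  stmt10_general B hB P hel b b' hb hb' hne
end
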